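/- arXiv:2504.15818 — 3 statements merged into one kernel-verified Lean document; each statement's English description precedes it below -/
import Mathlib

section
/- Let D ≥ 1 and let ξ : ℝ^{D×D} → ℝ be continuous, strictly convex on S^D_+, nondecreasing for the Loewner order on S^D_+ (if a ≥ b with a,b ∈ S^D_+ then ξ(a) ≥ ξ(b)), and superlinear on S^D_+. Then the restriction of ξ* to S^D is continuously differentiable, and for every y ∈ S^D its gradient ∇ξ*(y) equals the unique maximizer of x ↦ x·y − ξ(x) over S^D_+. -/
/-!
STATEMENT 6: If ξ : ℝ^{D×D} → ℝ is continuous, strictly convex on `S^D_+`, nondecreasing for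
the Loewner order on `S^D_+`, and superlinear on `S^D_+`, then the restriction of `ξ*` to the
space `S^D` of symmetric matrices is continuously differentiable, and for every symmetric `y`
its gradient `∇ξ*(y)` equals the unique maximizer of `x ↦ x·y − ξ(x)` over `S^D_+`.
Differentiability on `S^D` is encoded via directional derivatives along symmetric directions,
represented through the Frobenius inner product by the gradient `gstar y`, and continuous
differentiability by the continuity of `gstar` on `S^D`.
-/

noncomputable section

/-- `D × D` real matrices. -/
abbrev Mat (D : ℕ) := Matrix (Fin D) (Fin D) ℝ

/-- Frobenius inner product `a · b = ∑_{i,j} a_{ij} b_{ij}`. -/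
def dotp {D : ℕ} (a b : Mat D) : ℝ := ∑ i, ∑ j, a i j * b i j

/-- Frobenius norm. -/
def fnorm {D : ℕ} (a : Mat D) : ℝ := Real.sqrt (dotp a a)

/-- Real-valued convex dual of `ξ` with respect to the cone `S^D_+`. -/
def xiStarR {D : ℕ} (ξ : Mat D → ℝ) (a : Mat D) : ℝ :=
  sSup ((fun b => dotp a b - ξ b) '' {b : Mat D | b.PosSemidef})

/-- `ξ` is superlinear on `S^D_+`. -/
def Superlinear {D : ℕ} (ξ : Mat D → ℝ) : Prop :=
  ∀ M : ℝ, 0 < M → ∃ R : ℝ, 0 < R ∧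
    ∀ x : Mat D, x.PosSemidef → R ≤ fnorm x → M * fnorm x ≤ ξ x

namespace XiAux

open Filter Topology

variable {D : ℕ}

instance : FirstCountableTopology (Mat D) :=
  inferInstanceAs (FirstCountableTopology (Fin D → Fin D → ℝ))

/-- `ℓ¹` sum of absolute values of entries. -/
def csum (y : Mat D) : ℝ := ∑ i, ∑ j, |y i j|

lemma csum_nonneg (y : Mat D) : 0 ≤ csum y :=
  Finset.sum_nonneg fun _ _ => Finset.sum_nonneg fun _ _ => abs_nonneg _

lemma continuous_entry (i j : Fin D) : Continuous (fun M : Mat D => M i j) :=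
  (continuous_apply j).comp (continuous_apply i)

lemma continuous_csum : Continuous (csum (D := D)) := by
  unfold csum
  exact continuous_finset_sum _ fun i _ =>
    continuous_finset_sum _ fun j _ => (continuous_entry i j).abs

lemma continuous_dotp : Continuous (fun p : Mat D × Mat D => dotp p.1 p.2) := by
  unfold dotp
  exact continuous_finset_sum _ fun i _ => continuous_finset_sum _ fun j _ =>
    (((continuous_entry i j).comp continuous_fst)).mul
      (((continuous_entry i j).comp continuous_snd))

lemma continuous_dotp_left (v : Mat D) : Continuous (fun a : Mat D => dotp a v) :=
  continuous_dotp.comp (continuous_id.prodMk continuous_const)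

lemma continuous_dotp_right (x : Mat D) : Continuous (fun b : Mat D => dotp x b) :=
  continuous_dotp.comp (continuous_const.prodMk continuous_id)

lemma dotp_comm (a b : Mat D) : dotp a b = dotp b a := by
  unfold dotp; congr 1; ext i; congr 1; ext j; ring

lemma dotp_self_nonneg (a : Mat D) : 0 ≤ dotp a a :=
  Finset.sum_nonneg fun _ _ => Finset.sum_nonneg fun _ _ => mul_self_nonneg _

lemma fnorm_nonneg (a : Mat D) : 0 ≤ fnorm a := Real.sqrt_nonneg _

lemma fnorm_zero : fnorm (0 : Mat D) = 0 := by
  simp [fnorm, dotp]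

lemma dotp_add_right (a b c : Mat D) : dotp a (b + c) = dotp a b + dotp a c := by
  unfold dotp
  rw [← Finset.sum_add_distrib]
  congr 1; ext i
  rw [← Finset.sum_add_distrib]
  congr 1; ext j
  simp [Matrix.add_apply, mul_add]

lemma dotp_smul_right (s : ℝ) (a b : Mat D) : dotp a (s • b) = s * dotp a b := by
  unfold dotp
  rw [Finset.mul_sum]
  congr 1; ext i
  rw [Finset.mul_sum]
  congr 1; ext j
  simp [Matrix.smul_apply]; ring

lemma dotp_zero_left (b : Mat D) : dotp 0 b = 0 := by simp [dotp]

lemma abs_entry_le_fnorm (a : Mat D) (i j : Fin D) : |a i j| ≤ fnorm a := by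
  have h1 : a i j * a i j ≤ dotp a a := by
    unfold dotp
    have h2 : a i j * a i j ≤ ∑ j', a i j' * a i j' :=
      Finset.single_le_sum (fun k _ => mul_self_nonneg (a i k)) (Finset.mem_univ j)
    refine h2.trans ?_
    exact Finset.single_le_sum
      (fun k _ => Finset.sum_nonneg fun l _ => mul_self_nonneg (a k l)) (Finset.mem_univ i)
  calc |a i j| = Real.sqrt (a i j * a i j) := by
        rw [← Real.sqrt_mul_self_eq_abs]
    _ ≤ Real.sqrt (dotp a a) := Real.sqrt_le_sqrt h1

lemma dotp_le_csum_mul_fnorm (a y : Mat D) : dotp a y ≤ csum y * fnorm a := by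
  unfold dotp
  have : ∀ i ∈ Finset.univ, ∀ j ∈ (Finset.univ : Finset (Fin D)),
      a i j * y i j ≤ fnorm a * |y i j| := by
    intro i _ j _
    calc a i j * y i j ≤ |a i j * y i j| := le_abs_self _
      _ = |a i j| * |y i j| := abs_mul _ _
      _ ≤ fnorm a * |y i j| :=
        mul_le_mul_of_nonneg_right (abs_entry_le_fnorm a i j) (abs_nonneg _)
  calc (∑ i, ∑ j, a i j * y i j) ≤ ∑ i, ∑ j, fnorm a * |y i j| :=
        Finset.sum_le_sum fun i hi => Finset.sum_le_sum (this i hi)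
    _ = fnorm a * csum y := by rw [csum, Finset.mul_sum]; congr 1; ext i; rw [Finset.mul_sum]
    _ = csum y * fnorm a := mul_comm _ _

lemma continuous_fnorm : Continuous (fnorm (D := D)) :=
  Real.continuous_sqrt.comp (continuous_dotp.comp (continuous_id.prodMk continuous_id))

lemma isClosed_psd : IsClosed {x : Mat D | x.PosSemidef} := by
  have h : {x : Mat D | x.PosSemidef} =
      {x : Mat D | x.IsHermitian} ∩
        ⋂ v : Fin D → ℝ, {x : Mat D | 0 ≤ dotProduct (star v) (x.mulVec v)} := by
    ext x
    simp only [Set.mem_setOf_eq, Set.mem_inter_iff, Set.mem_iInter, Matrix.posSemidef_iff_dotProduct_mulVec]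
  rw [h]
  refine IsClosed.inter ?_ (isClosed_iInter fun v => ?_)
  · have h2 : {x : Mat D | x.IsHermitian} = ⋂ i, ⋂ j, {x : Mat D | x j i = x i j} := by
      ext x
      simp only [Set.mem_setOf_eq, Set.mem_iInter, Matrix.IsHermitian, ← Matrix.ext_iff,
        Matrix.conjTranspose_apply, star_trivial]
    rw [h2]
    exact isClosed_iInter fun i => isClosed_iInter fun j =>
      isClosed_eq (continuous_entry j i) (continuous_entry i j)
  · have hc : Continuous fun x : Mat D => dotProduct (star v) (x.mulVec v) := by
      have he : (fun x : Mat D => dotProduct (star v) (x.mulVec v))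
          = fun x : Mat D => ∑ i, star v i * ∑ j, x i j * v j := by
        funext x; rfl
      rw [he]
      exact continuous_finset_sum _ fun i _ => continuous_const.mul
        (continuous_finset_sum _ fun j _ => (continuous_entry i j).mul continuous_const)
    exact isClosed_le continuous_const hc

lemma isCompact_K (B : ℝ) : IsCompact {x : Mat D | x.PosSemidef ∧ fnorm x ≤ B} := by
  have hcube : IsCompact {x : Mat D | ∀ i j, x i j ∈ Set.Icc (-B) B} := by
    have h : {x : Mat D | ∀ i j, x i j ∈ Set.Icc (-B) B} =
        Set.univ.pi (fun _ : Fin D => Set.univ.pi (fun _ : Fin D => Set.Icc (-B) B)) := by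
      ext x
      constructor
      · intro hx i _
        intro j _
        exact hx i j
      · intro hx i j
        exact hx i (Set.mem_univ i) j (Set.mem_univ j)
    rw [h]
    exact isCompact_univ_pi fun i => isCompact_univ_pi fun j => isCompact_Icc
  refine hcube.of_isClosed_subset ?_ ?_
  · exact isClosed_psd.inter (isClosed_le continuous_fnorm continuous_const)
  · rintro x ⟨-, hx⟩ i j
    have := (abs_entry_le_fnorm x i j).trans hx
    exact abs_le.mp this

/-- Two maximizers coincide. -/
lemma unique_max {ξ : Mat D → ℝ} (hsconv : StrictConvexOn ℝ {x : Mat D | x.PosSemidef} ξ)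
    (y : Mat D) {g₁ g₂ : Mat D} (h₁ : g₁.PosSemidef) (h₂ : g₂.PosSemidef)
    (hm₁ : ∀ x : Mat D, x.PosSemidef → dotp x y - ξ x ≤ dotp g₁ y - ξ g₁)
    (hm₂ : ∀ x : Mat D, x.PosSemidef → dotp x y - ξ x ≤ dotp g₂ y - ξ g₂) : g₁ = g₂ := by
  by_contra hne
  set m : Mat D := (1/2 : ℝ) • g₁ + (1/2 : ℝ) • g₂ with hm
  have hmPSD : m.PosSemidef := by
    refine Matrix.PosSemidef.of_dotProduct_mulVec_nonneg ?_ ?_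
    · have e₁ : ∀ i j, g₁ j i = g₁ i j := fun i j => by simpa using h₁.1.apply i j
      have e₂ : ∀ i j, g₂ j i = g₂ i j := fun i j => by simpa using h₂.1.apply i j
      ext i j
      simp only [hm, Matrix.conjTranspose_apply, Matrix.add_apply, Matrix.smul_apply,
        star_trivial, smul_eq_mul]
      rw [e₁ i j, e₂ i j]
    · intro x
      have q₁ := h₁.dotProduct_mulVec_nonneg x
      have q₂ := h₂.dotProduct_mulVec_nonneg x
      simp only [hm, Matrix.add_mulVec, Matrix.smul_mulVec, dotProduct_add,
        dotProduct_smul, smul_eq_mul] at q₁ q₂ ⊢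
      all_goals linarith
  have hconv := hsconv.2 h₁ h₂ hne (by norm_num : (0:ℝ) < 1/2) (by norm_num : (0:ℝ) < 1/2)
    (by norm_num)
  have hdm : dotp m y = (1/2) * dotp g₁ y + (1/2) * dotp g₂ y := by
    rw [hm, dotp_comm, dotp_add_right, dotp_smul_right, dotp_smul_right,
      dotp_comm g₁ y, dotp_comm g₂ y]
  have hv : dotp g₁ y - ξ g₁ = dotp g₂ y - ξ g₂ :=
    le_antisymm (hm₂ g₁ h₁) (hm₁ g₂ h₂)
  simp only [smul_eq_mul] at hconv
  have := hm₁ m hmPSD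
  rw [hdm] at this
  linarith [hconv]

end XiAux

open XiAux Filter Topology

theorem xiStar_contDiff_on_symm
    (D : ℕ) (hD : 1 ≤ D) (ξ : Mat D → ℝ)
    (hcont : Continuous ξ)
    (hsconv : StrictConvexOn ℝ {x : Mat D | x.PosSemidef} ξ)
    (hmono : ∀ a b : Mat D, a.PosSemidef → b.PosSemidef → (a - b).PosSemidef → ξ b ≤ ξ a)
    (hsl : Superlinear ξ) :
    ∃ gstar : Mat D → Mat D,
      -- `gstar y` is the unique maximizer of `x ↦ x·y − ξ(x)` over `S^D_+`
      (∀ y : Mat D, y.IsSymm →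
        (gstar y).PosSemidef ∧
        dotp (gstar y) y - ξ (gstar y) = xiStarR ξ y ∧
        (∀ x : Mat D, x.PosSemidef → dotp x y - ξ x ≤ dotp (gstar y) y - ξ (gstar y)) ∧
        (∀ x : Mat D, x.PosSemidef → dotp x y - ξ x = xiStarR ξ y → x = gstar y)) ∧
      -- `gstar` is the gradient of the restriction of `ξ*` to `S^D`
      (∀ y v : Mat D, y.IsSymm → v.IsSymm →
        HasDerivAt (fun s : ℝ => xiStarR ξ (y + s • v)) (dotp (gstar y) v) 0) ∧
      -- the gradient is continuous on `S^D`
      ContinuousOn gstar {y : Mat D | y.IsSymm} := by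
  classical
  -- the objective function is continuous
  have hobj : ∀ y : Mat D, Continuous fun x : Mat D => dotp x y - ξ x := fun y =>
    (continuous_dotp_left y).sub hcont
  -- Step 1: existence of a global maximizer for every `y`
  have hex : ∀ y : Mat D, ∃ g : Mat D, g.PosSemidef ∧
      ∀ x : Mat D, x.PosSemidef → dotp x y - ξ x ≤ dotp g y - ξ g := by
    intro y
    obtain ⟨R, hRpos, hRs⟩ := hsl (csum y + 1) (by have := csum_nonneg y; linarith)
    set B := max R (max (ξ 0) 1) with hB
    have hBpos : (0:ℝ) < B :=
      lt_of_lt_of_le one_pos ((le_max_right (ξ 0) 1).trans (le_max_right R _))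
    have h0K : (0 : Mat D) ∈ {x : Mat D | x.PosSemidef ∧ fnorm x ≤ B} :=
      ⟨Matrix.PosSemidef.zero, by rw [fnorm_zero]; exact hBpos.le⟩
    obtain ⟨g, hgK, hgm⟩ := (isCompact_K B).exists_isMaxOn ⟨0, h0K⟩ ((hobj y).continuousOn)
    refine ⟨g, hgK.1, ?_⟩
    intro x hx
    by_cases hxB : fnorm x ≤ B
    · exact hgm ⟨hx, hxB⟩
    · push_neg at hxB
      have h1 : (csum y + 1) * fnorm x ≤ ξ x :=
        hRs x hx (le_of_lt (lt_of_le_of_lt (le_max_left R _) hxB))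
      have h2 : dotp x y ≤ csum y * fnorm x := dotp_le_csum_mul_fnorm x y
      have h3 : ξ 0 ≤ B := (le_max_left (ξ 0) 1).trans (le_max_right R _)
      have h4 : dotp 0 y - ξ 0 ≤ dotp g y - ξ g := hgm h0K
      have h5 : dotp (0 : Mat D) y = 0 := dotp_zero_left y
      have hmul : (csum y + 1) * fnorm x = csum y * fnorm x + fnorm x := by ring
      linarith
  choose gstar hPSD hmax using hex
  -- Step 2: the value of the maximum is `xiStarR`
  have hval : ∀ y : Mat D, dotp (gstar y) y - ξ (gstar y) = xiStarR ξ y := by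
    intro y
    have hbdd : BddAbove ((fun b => dotp y b - ξ b) '' {b : Mat D | b.PosSemidef}) := by
      refine ⟨dotp (gstar y) y - ξ (gstar y), ?_⟩
      rintro a ⟨b, hb, rfl⟩
      show dotp y b - ξ b ≤ dotp (gstar y) y - ξ (gstar y)
      rw [dotp_comm y b]
      exact hmax y b hb
    have hne : ((fun b => dotp y b - ξ b) '' {b : Mat D | b.PosSemidef}).Nonempty :=
      ⟨_, ⟨0, Matrix.PosSemidef.zero, rfl⟩⟩
    refine le_antisymm ?_ ?_
    · refine le_csSup hbdd ⟨gstar y, hPSD y, ?_⟩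
      show dotp y (gstar y) - ξ (gstar y) = dotp (gstar y) y - ξ (gstar y)
      rw [dotp_comm y (gstar y)]
    · refine csSup_le hne ?_
      rintro a ⟨b, hb, rfl⟩
      show dotp y b - ξ b ≤ dotp (gstar y) y - ξ (gstar y)
      rw [dotp_comm y b]
      exact hmax y b hb
  -- Step 3: uniqueness of the maximizer
  have huniq : ∀ y x : Mat D, x.PosSemidef →
      (∀ z : Mat D, z.PosSemidef → dotp z y - ξ z ≤ dotp x y - ξ x) → x = gstar y :=
    fun y x hx hxm => unique_max hsconv y hx (hPSD y) hxm (hmax y)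
  -- Step 4: continuity of `gstar`
  have hcg : Continuous gstar := by
    rw [continuous_iff_continuousAt]
    intro y₀
    unfold ContinuousAt
    obtain ⟨R, hRpos, hRs⟩ := hsl (csum y₀ + 2) (by have := csum_nonneg y₀; linarith)
    set B := max R (max (ξ 0) 1) with hB
    have hBpos : (0:ℝ) < B :=
      lt_of_lt_of_le one_pos ((le_max_right (ξ 0) 1).trans (le_max_right R _))
    have hbound : ∀ y : Mat D, csum y ≤ csum y₀ + 1 → fnorm (gstar y) ≤ B := by
      intro y hy
      by_contra hgt
      push_neg at hgt
      have h1 : (csum y₀ + 2) * fnorm (gstar y) ≤ ξ (gstar y) :=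
        hRs (gstar y) (hPSD y) (le_of_lt (lt_of_le_of_lt (le_max_left R _) hgt))
      have h2 : dotp (gstar y) y ≤ csum y * fnorm (gstar y) := dotp_le_csum_mul_fnorm _ y
      have h3 : ξ 0 ≤ B := (le_max_left (ξ 0) 1).trans (le_max_right R _)
      have h4 : dotp 0 y - ξ 0 ≤ dotp (gstar y) y - ξ (gstar y) := hmax y 0 Matrix.PosSemidef.zero
      have h5 : dotp (0 : Mat D) y = 0 := dotp_zero_left y
      have hF : 0 ≤ fnorm (gstar y) := fnorm_nonneg _
      have h6 : csum y * fnorm (gstar y) ≤ (csum y₀ + 1) * fnorm (gstar y) :=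
        mul_le_mul_of_nonneg_right hy hF
      have hmul : (csum y₀ + 2) * fnorm (gstar y)
          = (csum y₀ + 1) * fnorm (gstar y) + fnorm (gstar y) := by ring
      linarith
    apply Filter.tendsto_of_subseq_tendsto
    intro ns hns
    have hcs : Tendsto (fun n => csum (ns n)) atTop (𝓝 (csum y₀)) :=
      (continuous_csum.tendsto y₀).comp hns
    have hev : ∀ᶠ n in atTop, csum (ns n) ≤ csum y₀ + 1 :=
      (hcs.eventually_lt_const (by linarith : csum y₀ < csum y₀ + 1)).mono fun n h => h.le
    obtain ⟨N, hN⟩ := hev.exists_forall_of_atTop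
    set w : ℕ → Mat D := fun n => gstar (ns (n + N)) with hw
    have hwK : ∀ n, w n ∈ {x : Mat D | x.PosSemidef ∧ fnorm x ≤ B} := fun n =>
      ⟨hPSD _, hbound _ (hN _ (Nat.le_add_left N n))⟩
    obtain ⟨a, haK, φ, hφ, hwa⟩ := (isCompact_K B).tendsto_subseq hwK
    refine ⟨fun n => φ n + N, ?_⟩
    have hφ' : StrictMono fun n => φ n + N := fun m n h => Nat.add_lt_add_right (hφ h) N
    have hsub : Tendsto (fun n => ns (φ n + N)) atTop (𝓝 y₀) :=
      hns.comp hφ'.tendsto_atTop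
    have hwφ : Tendsto (fun n => gstar (ns (φ n + N))) atTop (𝓝 a) := hwa
    have hamax : ∀ x : Mat D, x.PosSemidef → dotp x y₀ - ξ x ≤ dotp a y₀ - ξ a := by
      intro x hx
      have hle : ∀ n, dotp x (ns (φ n + N)) - ξ x
          ≤ dotp (gstar (ns (φ n + N))) (ns (φ n + N)) - ξ (gstar (ns (φ n + N))) :=
        fun n => hmax _ x hx
      have t1 : Tendsto (fun n => dotp x (ns (φ n + N)) - ξ x) atTop (𝓝 (dotp x y₀ - ξ x)) :=
        (((continuous_dotp_right x).tendsto y₀).comp hsub).sub tendsto_const_nhds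
      have t2 : Tendsto
          (fun n => dotp (gstar (ns (φ n + N))) (ns (φ n + N)) - ξ (gstar (ns (φ n + N))))
          atTop (𝓝 (dotp a y₀ - ξ a)) :=
        ((continuous_dotp.tendsto (a, y₀)).comp (hwφ.prodMk_nhds hsub)).sub
          ((hcont.tendsto a).comp hwφ)
      exact le_of_tendsto_of_tendsto' t1 t2 hle
    have ha : a = gstar y₀ := huniq y₀ a haK.1 hamax
    rw [← ha]
    exact hwφ
  -- Step 5: the derivative
  have hder : ∀ y v : Mat D,
      HasDerivAt (fun s : ℝ => xiStarR ξ (y + s • v)) (dotp (gstar y) v) 0 := by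
    intro y v
    set L := dotp (gstar y) v with hL
    have hy0 : y + (0:ℝ) • v = y := by simp
    have expand : ∀ (a : Mat D) (s : ℝ), dotp a (y + s • v) = dotp a y + s * dotp a v := by
      intro a s
      rw [dotp_add_right, dotp_smul_right]
    have key1 : ∀ s : ℝ, xiStarR ξ y + s * L ≤ xiStarR ξ (y + s • v) := by
      intro s
      have h := hmax (y + s • v) (gstar y) (hPSD y)
      rw [hval (y + s • v)] at h
      rw [expand] at h
      rw [← hval y]
      linarith
    have key2 : ∀ s : ℝ, xiStarR ξ (y + s • v)
        ≤ xiStarR ξ y + s * dotp (gstar (y + s • v)) v := by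
      intro s
      have h := hmax y (gstar (y + s • v)) (hPSD (y + s • v))
      rw [hval y] at h
      rw [← hval (y + s • v), expand]
      linarith
    rw [hasDerivAt_iff_tendsto_slope, tendsto_iff_dist_tendsto_zero]
    have hcont2 : Tendsto (fun s : ℝ => |dotp (gstar (y + s • v)) v - L|)
        (𝓝[≠] (0:ℝ)) (𝓝 0) := by
      have c1 : Continuous fun s : ℝ => y + s • v :=
        continuous_const.add (continuous_id.smul continuous_const)
      have c2 : Continuous fun s : ℝ => |dotp (gstar (y + s • v)) v - L| :=
        (((continuous_dotp_left v).comp (hcg.comp c1)).sub continuous_const).abs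
      have h3 : Tendsto (fun s : ℝ => |dotp (gstar (y + s • v)) v - L|) (𝓝[≠] (0:ℝ))
          (𝓝 |dotp (gstar (y + (0:ℝ) • v)) v - L|) :=
        (c2.tendsto 0).mono_left nhdsWithin_le_nhds
      simpa [hy0, hL] using h3
    refine squeeze_zero' (Filter.Eventually.of_forall fun s => dist_nonneg) ?_ hcont2
    filter_upwards [self_mem_nhdsWithin] with s hs
    have hs0 : s ≠ 0 := by simpa using hs
    have hA1 := key1 s
    have hA2 := key2 s
    rw [Real.dist_eq, slope_def_field]
    simp only [hy0, sub_zero]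
    set A := xiStarR ξ (y + s • v) - xiStarR ξ y with hA
    set d := dotp (gstar (y + s • v)) v with hd
    have hq : A / s - L = (A - s * L) / s := by field_simp
    have h0 : 0 ≤ A - s * L := by rw [hA]; linarith
    have h1 : A - s * L ≤ s * (d - L) := by
      have : s * (d - L) = s * d - s * L := by ring
      rw [this, hA]; linarith
    have hE : |A - s * L| ≤ |s| * |d - L| := by
      calc |A - s * L| = A - s * L := abs_of_nonneg h0
        _ ≤ s * (d - L) := h1
        _ ≤ |s * (d - L)| := le_abs_self _
        _ = |s| * |d - L| := abs_mul _ _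
    rw [hq, abs_div, div_le_iff₀ (abs_pos.mpr hs0)]
    calc |A - s * L| ≤ |s| * |d - L| := hE
      _ = |d - L| * |s| := mul_comm _ _
  -- Assemble
  refine ⟨gstar, ?_, fun y v _ _ => hder y v, hcg.continuousOn⟩
  intro y _
  refine ⟨hPSD y, hval y, hmax y, ?_⟩
  intro x hx hxval
  refine huniq y x hx ?_
  intro z hz
  rw [hxval, ← hval y]
  exact hmax y z hz

end
end

section
/- Let D ≥ 1 and let ξ : ℝ^{D×D} → ℝ be differentiable, strictly convex on S^D_+, nondecreasing for the Loewner order on S^D_+, superlinear on S^D_+, and such that ∇ξ maps S^D into S^D. Then the restriction of ξ* to S^D is differentiable and for every x ∈ S^D_+ one has ∇ξ*(∇ξ(x)) = x. -/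
/-!
STATEMENT 7: If ξ : ℝ^{D×D} → ℝ is differentiable (with gradient `g`, characterized by
directional derivatives via the Frobenius inner product), strictly convex on `S^D_+`,
nondecreasing for the Loewner order on `S^D_+`, superlinear on `S^D_+`, and `∇ξ` maps `S^D`
into `S^D`, then the restriction of `ξ*` to `S^D` is differentiable (with a symmetric-valued
gradient `gstar`) and `∇ξ*(∇ξ(x)) = x` for every `x ∈ S^D_+`.
-/

noncomputable section

namespace Aux

variable {D : ℕ}
open Matrix Filter Topology



lemma dotp_eq_prod (a b : Mat D) :
    dotp a b = ∑ p : Fin D × Fin D, a p.1 p.2 * b p.1 p.2 := by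
  rw [dotp, ← Finset.sum_product']
  rfl

lemma dotp_comm (a b : Mat D) : dotp a b = dotp b a := by
  simp [dotp, mul_comm]

lemma dotp_add_right (a b c : Mat D) : dotp a (b + c) = dotp a b + dotp a c := by
  simp [dotp, Matrix.add_apply, mul_add, Finset.sum_add_distrib]

lemma dotp_sub_right (a b c : Mat D) : dotp a (b - c) = dotp a b - dotp a c := by
  simp [dotp, Matrix.sub_apply, mul_sub, Finset.sum_sub_distrib]

lemma dotp_smul_right (a : Mat D) (r : ℝ) (b : Mat D) :
    dotp a (r • b) = r * dotp a b := by
  rw [dotp_eq_prod, dotp_eq_prod, Finset.mul_sum]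
  apply Finset.sum_congr rfl; intro p _; simp [Matrix.smul_apply]; ring

lemma dotp_zero_right (a : Mat D) : dotp a 0 = 0 := by simp [dotp]

lemma dotp_self_nonneg (a : Mat D) : 0 ≤ dotp a a := by
  apply Finset.sum_nonneg; intro i _; apply Finset.sum_nonneg; intro j _; exact mul_self_nonneg _

lemma fnorm_nonneg (a : Mat D) : 0 ≤ fnorm a := Real.sqrt_nonneg _

lemma fnorm_sq (a : Mat D) : fnorm a ^ 2 = dotp a a := Real.sq_sqrt (dotp_self_nonneg a)

lemma dotp_le (a b : Mat D) : dotp a b ≤ fnorm a * fnorm b := by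
  rw [dotp_eq_prod, fnorm, fnorm, dotp_eq_prod, dotp_eq_prod]
  simpa [sq] using Real.sum_mul_le_sqrt_mul_sqrt Finset.univ
    (fun p : Fin D × Fin D => a p.1 p.2) (fun p => b p.1 p.2)

lemma dotp_neg_left (a b : Mat D) : dotp (-a) b = - dotp a b := by
  simp [dotp, Finset.sum_neg_distrib]

lemma fnorm_neg (a : Mat D) : fnorm (-a) = fnorm a := by
  simp [fnorm, dotp]

lemma abs_dotp_le (a b : Mat D) : |dotp a b| ≤ fnorm a * fnorm b := by
  rcases abs_cases (dotp a b) with ⟨h, _⟩ | ⟨h, _⟩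
  · rw [h]; exact dotp_le a b
  · rw [h, ← dotp_neg_left, ← fnorm_neg a]; exact dotp_le (-a) b

lemma fnorm_eq_zero {a : Mat D} (h : fnorm a = 0) : a = 0 := by
  have h2 : dotp a a = 0 := by
    have := fnorm_sq a; rw [h] at this; simpa using this.symm
  ext i j
  have h3 : ∀ p ∈ (Finset.univ : Finset (Fin D × Fin D)),
      0 ≤ a p.1 p.2 * a p.1 p.2 := fun p _ => mul_self_nonneg _
  rw [dotp_eq_prod] at h2
  have := (Finset.sum_eq_zero_iff_of_nonneg h3).1 h2 (i, j) (Finset.mem_univ _)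
  simpa [mul_self_eq_zero] using this

lemma fnorm_smul (r : ℝ) (a : Mat D) : fnorm (r • a) = |r| * fnorm a := by
  have : dotp (r • a) (r • a) = r ^ 2 * dotp a a := by
    rw [dotp_eq_prod, dotp_eq_prod, Finset.mul_sum]
    apply Finset.sum_congr rfl; intro p _; simp [Matrix.smul_apply]; ring
  rw [fnorm, this, fnorm, Real.sqrt_mul (sq_nonneg r), Real.sqrt_sq_eq_abs]

lemma fnorm_add_le (a b : Mat D) : fnorm (a + b) ≤ fnorm a + fnorm b := by
  have h1 : dotp (a+b) (a+b) = dotp a a + 2 * dotp a b + dotp b b := by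
    rw [dotp_eq_prod, dotp_eq_prod, dotp_eq_prod, dotp_eq_prod, Finset.mul_sum,
      ← Finset.sum_add_distrib, ← Finset.sum_add_distrib]
    apply Finset.sum_congr rfl; intro p _; simp [Matrix.add_apply]; ring
  have h2 : dotp (a+b) (a+b) ≤ (fnorm a + fnorm b) ^ 2 := by
    rw [h1]
    have := dotp_le a b
    have ha := fnorm_sq a; have hb := fnorm_sq b
    nlinarith [fnorm_nonneg a, fnorm_nonneg b]
  calc fnorm (a+b) = Real.sqrt (dotp (a+b) (a+b)) := rfl
    _ ≤ Real.sqrt ((fnorm a + fnorm b)^2) := Real.sqrt_le_sqrt h2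
    _ = fnorm a + fnorm b := by
        exact Real.sqrt_sq (add_nonneg (fnorm_nonneg a) (fnorm_nonneg b))

lemma entry_abs_le_fnorm (a : Mat D) (i j : Fin D) : |a i j| ≤ fnorm a := by
  have h : (a i j)^2 ≤ dotp a a := by
    rw [dotp_eq_prod]
    have : ((a i j)^2) = (fun p : Fin D × Fin D => a p.1 p.2 * a p.1 p.2) (i,j) := by
      simp [sq]
    rw [this]
    exact Finset.single_le_sum (f := fun p : Fin D × Fin D => a p.1 p.2 * a p.1 p.2)
      (fun p _ => mul_self_nonneg _) (Finset.mem_univ (i,j))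
  calc |a i j| = Real.sqrt ((a i j)^2) := (Real.sqrt_sq_eq_abs _).symm
    _ ≤ Real.sqrt (dotp a a) := Real.sqrt_le_sqrt h



lemma quad_eq_dotp (A : Mat D) (x : Fin D → ℝ) :
    x ⬝ᵥ (A *ᵥ x) = dotp A (Matrix.of fun i j => x i * x j) := by
  simp [dotProduct, Matrix.mulVec, dotp, Finset.mul_sum]
  apply Finset.sum_congr rfl; intro i _
  apply Finset.sum_congr rfl; intro j _
  ring

lemma fnorm_rankone (x : Fin D → ℝ) :
    fnorm (Matrix.of fun i j => x i * x j) = ∑ i, x i * x i := by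
  have : dotp (Matrix.of fun i j => x i * x j) (Matrix.of fun i j => x i * x j)
      = (∑ i, x i * x i) * (∑ i, x i * x i) := by
    simp [dotp, Finset.mul_sum, Finset.sum_mul]
    apply Finset.sum_congr rfl; intro i _
    apply Finset.sum_congr rfl; intro j _
    ring
  rw [fnorm, this, Real.sqrt_mul_self]
  exact Finset.sum_nonneg fun i _ => mul_self_nonneg _

lemma quad_abs_le (A : Mat D) (x : Fin D → ℝ) :
    |x ⬝ᵥ (A *ᵥ x)| ≤ fnorm A * ∑ i, x i * x i := by
  rw [quad_eq_dotp, ← fnorm_rankone x]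
  exact abs_dotp_le _ _

/-- key order lemma : if `w` is hermitian with `fnorm w ≤ r` then `r • 1 - w` is PSD. -/
lemma smul_one_sub_psd {w : Mat D} {r : ℝ} (hw : w.IsHermitian) (h : fnorm w ≤ r) :
    (r • (1 : Mat D) - w).PosSemidef := by
  rw [Matrix.posSemidef_iff_dotProduct_mulVec]
  constructor
  · apply Matrix.IsHermitian.ext
    intro i j
    have := hw.apply i j
    simp [Matrix.sub_apply, Matrix.smul_apply, Matrix.one_apply, star_trivial] at this ⊢
    rw [← this]; rcases eq_or_ne i j with h | h <;> simp [h, eq_comm, Matrix.one_apply]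
  · intro x
    have h1 : (star x) ⬝ᵥ ((r • (1:Mat D) - w) *ᵥ x)
        = r * (∑ i, x i * x i) - x ⬝ᵥ (w *ᵥ x) := by
      simp [Matrix.sub_mulVec, dotProduct_sub, Matrix.smul_mulVec, star_trivial]
      simp [Matrix.one_mulVec, dotProduct, smul_eq_mul, Finset.mul_sum]
    rw [h1]
    have h2 := (abs_le.1 (quad_abs_le w x)).2
    have h3 : fnorm w * (∑ i, x i * x i) ≤ r * (∑ i, x i * x i) :=
      mul_le_mul_of_nonneg_right h (Finset.sum_nonneg fun i _ => mul_self_nonneg _)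
    linarith

lemma psd_smul {A : Mat D} (hA : A.PosSemidef) {r : ℝ} (hr : 0 ≤ r) :
    (r • A).PosSemidef := by
  rw [Matrix.posSemidef_iff_dotProduct_mulVec]
  constructor
  · apply Matrix.IsHermitian.ext
    intro i j
    have := hA.1.apply i j
    simp [Matrix.smul_apply, star_trivial, smul_eq_mul] at this ⊢
    left; exact this
  · intro x
    have : (star x) ⬝ᵥ ((r • A) *ᵥ x) = r * ((star x) ⬝ᵥ (A *ᵥ x)) := by
      simp [Matrix.smul_mulVec, dotProduct_smul, smul_eq_mul]
    rw [this]; exact mul_nonneg hr (hA.dotProduct_mulVec_nonneg x)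

lemma psd_smul_one {r : ℝ} (hr : 0 ≤ r) : ((r • (1 : Mat D)).PosSemidef) := by
  have := smul_one_sub_psd (w := (0 : Mat D)) (r := r) ?_ ?_
  · simpa using this
  · simp [Matrix.IsHermitian]
  · simpa [fnorm, dotp] using hr

lemma psd_convex {A B : Mat D} (hA : A.PosSemidef) (hB : B.PosSemidef) {s t : ℝ}
    (hs : 0 ≤ s) (ht : 0 ≤ t) : (s • A + t • B).PosSemidef :=
  (psd_smul hA hs).add (psd_smul hB ht)

lemma psd_symm {A : Mat D} (hA : A.PosSemidef) : A.IsSymm := by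
  have := hA.1
  rw [Matrix.IsHermitian, Matrix.conjTranspose] at this
  rw [Matrix.IsSymm]
  exact this



def toE (A : Mat D) : EuclideanSpace ℝ (Fin D × Fin D) := WithLp.toLp 2 (fun p : Fin D × Fin D => A p.1 p.2)

lemma norm_toE (A : Mat D) : ‖toE A‖ = fnorm A := by
  rw [EuclideanSpace.norm_eq, fnorm]
  congr 1
  rw [show dotp A A = ∑ p : Fin D × Fin D, A p.1 p.2 * A p.1 p.2 by
    rw [dotp, ← Finset.sum_product']; rfl]
  apply Finset.sum_congr rfl; intro p _
  simp [toE, Real.norm_eq_abs, sq_abs, sq]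

lemma toE_sub (A B : Mat D) : toE (A - B) = toE A - toE B := rfl

/-- Bolzano–Weierstrass for bounded PSD sequences. -/
lemma exists_subseq_tendsto (u : ℕ → Mat D) (R : ℝ) (hb : ∀ n, fnorm (u n) ≤ R)
    (hpsd : ∀ n, (u n).PosSemidef) :
    ∃ (c : Mat D) (ψ : ℕ → ℕ), c.PosSemidef ∧ StrictMono ψ ∧
      Tendsto (fun n => fnorm (u (ψ n) - c)) atTop (𝓝 0) := by
  have hmem : ∀ n, toE (u n) ∈ Metric.closedBall (0 : EuclideanSpace ℝ (Fin D × Fin D)) R := by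
    intro n
    rw [Metric.mem_closedBall, dist_zero_right, norm_toE]
    exact hb n
  obtain ⟨l, _, ψ, hψ, hconv⟩ :=
    (isCompact_closedBall (0 : EuclideanSpace ℝ (Fin D × Fin D)) R).tendsto_subseq hmem
  set c : Mat D := Matrix.of fun i j => l (i, j) with hc
  have htoEc : toE c = l := rfl
  have hfn : Tendsto (fun n => fnorm (u (ψ n) - c)) atTop (𝓝 0) := by
    have h1 : Tendsto (fun n => toE (u (ψ n))) atTop (𝓝 l) := hconv
    rw [tendsto_iff_norm_sub_tendsto_zero] at h1
    convert h1 using 2 with n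
    rw [← norm_toE, toE_sub, htoEc]
  have hentry : ∀ i j, Tendsto (fun n => u (ψ n) i j) atTop (𝓝 (c i j)) := by
    intro i j
    have h0 : Tendsto (fun n => u (ψ n) i j - c i j) atTop (𝓝 0) := by
      apply squeeze_zero_norm (t₀ := atTop) ?_ hfn
      intro n
      have := entry_abs_le_fnorm (u (ψ n) - c) i j
      simpa [Matrix.sub_apply] using this
    have := h0.add_const (c i j)
    simpa using this
  have hquad : ∀ x : Fin D → ℝ,
      Tendsto (fun n => x ⬝ᵥ ((u (ψ n)) *ᵥ x)) atTop (𝓝 (x ⬝ᵥ (c *ᵥ x))) := by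
    intro x
    have hexp : ∀ A : Mat D, x ⬝ᵥ (A *ᵥ x) = ∑ i, ∑ j, x i * (A i j * x j) := by
      intro A
      simp [dotProduct, Matrix.mulVec, Finset.mul_sum]
    simp only [hexp]
    apply tendsto_finset_sum; intro i _
    apply tendsto_finset_sum; intro j _
    exact tendsto_const_nhds.mul ((hentry i j).mul tendsto_const_nhds)
  refine ⟨c, ψ, Matrix.PosSemidef.of_dotProduct_mulVec_nonneg ?_ ?_, hψ, hfn⟩
  · apply Matrix.IsHermitian.ext
    intro i j
    have h1 : Tendsto (fun n => u (ψ n) j i) atTop (𝓝 (c j i)) := hentry j i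
    have h2 : Tendsto (fun n => u (ψ n) j i) atTop (𝓝 (c i j)) := by
      have : (fun n => u (ψ n) j i) = fun n => u (ψ n) i j := by
        funext n
        have hs := psd_symm (hpsd (ψ n))
        rw [Matrix.IsSymm] at hs
        conv_lhs => rw [← hs]
        rfl
      rw [this]; exact hentry i j
    simpa [star_trivial] using (tendsto_nhds_unique h1 h2)
  · intro x
    have := hquad x
    have hnn : ∀ n, 0 ≤ x ⬝ᵥ ((u (ψ n)) *ᵥ x) := by
      intro n
      simpa [star_trivial] using (hpsd (ψ n)).dotProduct_mulVec_nonneg x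
    simpa [star_trivial] using ge_of_tendsto' this hnn

lemma tendsto_dotp (a : Mat D) {u : ℕ → Mat D} {c : Mat D}
    (h : Tendsto (fun n => fnorm (u n - c)) atTop (𝓝 0)) :
    Tendsto (fun n => dotp a (u n)) atTop (𝓝 (dotp a c)) := by
  have h0 : Tendsto (fun n => dotp a (u n) - dotp a c) atTop (𝓝 0) := by
    apply squeeze_zero_norm (a := fun n => fnorm a * fnorm (u n - c)) ?_
      (by simpa using (tendsto_const_nhds (x := fnorm a)).mul h)
    intro n
    rw [← dotp_sub_right]
    exact abs_dotp_le a _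
  have := h0.add_const (dotp a c)
  simpa using this

lemma fnorm_sub_le (a b c : Mat D) : fnorm (a - c) ≤ fnorm (a - b) + fnorm (b - c) := by
  have : a - c = (a - b) + (b - c) := by abel
  rw [this]; exact fnorm_add_le _ _



/-- Gradient inequality for convex `ξ` on the PSD cone. -/
lemma grad_ineq (ξ : Mat D → ℝ) (g : Mat D → Mat D)
    (hdiff : ∀ x v : Mat D, HasDerivAt (fun s : ℝ => ξ (x + s • v)) (dotp (g x) v) 0)
    (hconv : ConvexOn ℝ {x : Mat D | x.PosSemidef} ξ)
    {x b : Mat D} (hx : x.PosSemidef) (hb : b.PosSemidef) :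
    ξ x + dotp (g x) (b - x) ≤ ξ b := by
  set φ : ℝ → ℝ := fun s => ξ (x + s • (b - x)) with hφdef
  have hφ0 : φ 0 = ξ x := by simp [hφdef]
  have hslope : ∀ s : ℝ, s ∈ Set.Ioc (0:ℝ) 1 → slope φ 0 s ≤ ξ b - ξ x := by
    intro s hs
    have key : φ s ≤ (1 - s) * ξ x + s * ξ b := by
      have h2 := hconv.2 hx hb (by linarith [hs.2] : (0:ℝ) ≤ 1 - s) (le_of_lt hs.1)
        (by ring : (1 - s) + s = 1)
      have e : (1 - s) • x + s • b = x + s • (b - x) := by module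
      rw [e] at h2
      exact h2
    rw [slope_def_field, hφ0]
    rw [div_le_iff₀ (by linarith [hs.1] : (0:ℝ) < s - 0)]
    simp only [sub_zero]
    nlinarith [hs.1]
  have hd := hdiff x (b - x)
  have hd' : Tendsto (slope φ 0) (𝓝[≠] (0:ℝ)) (𝓝 (dotp (g x) (b - x))) :=
    hasDerivAt_iff_tendsto_slope.1 hd
  have hd2 : Tendsto (slope φ 0) (𝓝[>] (0:ℝ)) (𝓝 (dotp (g x) (b - x))) :=
    hd'.mono_left (nhdsWithin_mono 0 (fun s hs => ne_of_gt hs))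
  have hle : dotp (g x) (b - x) ≤ ξ b - ξ x := by
    refine le_of_tendsto hd2 ?_
    filter_upwards [Ioc_mem_nhdsGT_of_mem (Set.mem_Ico.2 ⟨le_refl (0:ℝ), one_pos⟩)] with s hs
    exact hslope s hs
  linarith

/-- Lower bound for `ξ` on bounded parts of the PSD cone. -/
lemma lbound (ξ : Mat D → ℝ)
    (hconv : ConvexOn ℝ {x : Mat D | x.PosSemidef} ξ)
    (hmono : ∀ a b : Mat D, a.PosSemidef → b.PosSemidef → (a - b).PosSemidef → ξ b ≤ ξ a)
    {b : Mat D} {r : ℝ} (hb : b.PosSemidef) (hr : fnorm b ≤ r) :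
    2 * ξ (r • (1 : Mat D)) - ξ ((2*r) • (1 : Mat D)) ≤ ξ b := by
  have hr0 : 0 ≤ r := le_trans (fnorm_nonneg b) hr
  have hc2 : ((2*r) • (1 : Mat D) - b).PosSemidef :=
    smul_one_sub_psd hb.1 (by linarith)
  have hcomb : (1/2 : ℝ) • b + (1/2 : ℝ) • ((2*r) • (1 : Mat D) - b) = r • (1 : Mat D) := by
    match_scalars <;> ring
  have h2 := hconv.2 (Set.mem_setOf.2 hb) (Set.mem_setOf.2 hc2)
    (by norm_num : (0:ℝ) ≤ 1/2) (by norm_num : (0:ℝ) ≤ 1/2) (by norm_num)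
  rw [hcomb] at h2
  simp only [smul_eq_mul] at h2
  have h3 : ξ ((2*r) • (1 : Mat D) - b) ≤ ξ ((2*r) • (1 : Mat D)) := by
    apply hmono _ _ (psd_smul_one (by linarith)) hc2
    simpa using hb
  linarith

/-- Continuity estimate for `ξ` near uniformly-positive-definite points. -/
lemma cont_est (ξ : Mat D → ℝ)
    (hconv : ConvexOn ℝ {x : Mat D | x.PosSemidef} ξ)
    (hmono : ∀ a b : Mat D, a.PosSemidef → b.PosSemidef → (a - b).PosSemidef → ξ b ≤ ξ a)
    {p q : Mat D} {δ : ℝ} (hδ : 0 < δ) (hp : (p - δ • (1:Mat D)).PosSemidef) (hq : q.PosSemidef)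
    (hle : fnorm (q - p) ≤ δ) :
    |ξ q - ξ p| ≤ (fnorm (q - p) / δ) * (ξ (p + δ • (1:Mat D)) - ξ p) := by
  have hpPSD : p.PosSemidef := by
    have := hp.add (psd_smul_one hδ.le)
    simpa using this
  have hpδPSD : (p + δ • (1:Mat D)).PosSemidef := hpPSD.add (psd_smul_one hδ.le)
  have hC : 0 ≤ ξ (p + δ • (1:Mat D)) - ξ p := by
    have : ((p + δ • (1:Mat D)) - p).PosSemidef := by
      simpa using psd_smul_one hδ.le
    linarith [hmono _ _ hpδPSD hpPSD this]
  set η := fnorm (q - p) with hηdef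
  have hη0 : 0 ≤ η := fnorm_nonneg _
  rcases eq_or_lt_of_le hη0 with hη | hη
  · have : q - p = 0 := fnorm_eq_zero hη.symm
    have hqp : q = p := by
      have := sub_eq_zero.1 this; exact this
    simp [hqp, ← hη]
  -- now 0 < η ≤ δ
  have hherm : (q - p).IsHermitian := hq.1.sub hpPSD.1
  have hA : (η • (1:Mat D) - (q - p)).PosSemidef := smul_one_sub_psd hherm (le_refl η)
  have hB : (η • (1:Mat D) + (q - p)).PosSemidef := by
    have h1 : (-(q-p)).IsHermitian := by
      rw [show -(q-p) = p - q by abel]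
      exact hpPSD.1.sub hq.1
    have h2 : fnorm (-(q-p)) ≤ η := by rw [fnorm_neg]
    have h3 := smul_one_sub_psd h1 h2
    rw [show η • (1:Mat D) - -(q - p) = η • (1:Mat D) + (q - p) by abel] at h3
    exact h3
  have hδη : 0 ≤ δ / η := div_nonneg hδ.le hη0
  have e1 : (δ/η) * η = δ := div_mul_cancel₀ δ (ne_of_gt hη)
  -- the point w = p + (δ/η)(q-p)
  have hw : (p + (δ/η) • (q - p)).PosSemidef := by
    have key : p + (δ/η) • (q - p)
        = (p - δ • (1:Mat D)) + (δ/η) • (η • (1:Mat D) + (q - p)) := by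
      match_scalars <;> field_simp <;> ring
    rw [key]
    exact hp.add (psd_smul hB hδη)
  have hwM : ξ (p + (δ/η) • (q - p)) ≤ ξ (p + δ • (1:Mat D)) := by
    apply hmono _ _ hpδPSD hw
    have key : (p + δ • (1:Mat D)) - (p + (δ/η) • (q - p))
        = (δ/η) • (η • (1:Mat D) - (q - p)) := by
      match_scalars <;> field_simp <;> ring
    rw [key]
    exact psd_smul hA hδη
  -- the point w' = p + (δ/η)(p-q)
  have hw' : (p + (δ/η) • (p - q)).PosSemidef := by
    have key : p + (δ/η) • (p - q)
        = (p - δ • (1:Mat D)) + (δ/η) • (η • (1:Mat D) - (q - p)) := by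
      match_scalars <;> field_simp <;> ring
    rw [key]
    exact hp.add (psd_smul hA hδη)
  have hw'M : ξ (p + (δ/η) • (p - q)) ≤ ξ (p + δ • (1:Mat D)) := by
    apply hmono _ _ hpδPSD hw'
    have key : (p + δ • (1:Mat D)) - (p + (δ/η) • (p - q))
        = (δ/η) • (η • (1:Mat D) + (q - p)) := by
      match_scalars <;> field_simp <;> ring
    rw [key]
    exact psd_smul hB hδη
  set M := ξ (p + δ • (1:Mat D)) with hM
  -- upper estimate
  have hηδ1 : η / δ ≤ 1 := (div_le_one hδ).2 hle
  have hηδ0 : 0 ≤ η / δ := div_nonneg hη0 hδ.le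
  have hup : ξ q - ξ p ≤ (η/δ) * (M - ξ p) := by
    have combo : (1 - η/δ) • p + (η/δ) • (p + (δ/η) • (q - p)) = q := by
      match_scalars <;> field_simp <;> ring
    have h2 := hconv.2 (Set.mem_setOf.2 hpPSD) (Set.mem_setOf.2 hw)
      (show (0:ℝ) ≤ 1 - η/δ by linarith) hηδ0 (show (1 - η/δ) + η/δ = 1 by ring)
    rw [combo] at h2
    simp only [smul_eq_mul] at h2
    have h3 : (η/δ) * ξ (p + (δ/η) • (q - p)) ≤ (η/δ) * M :=
      mul_le_mul_of_nonneg_left hwM hηδ0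
    nlinarith
  -- lower estimate
  have hlow : ξ p - ξ q ≤ (η/δ) * (M - ξ p) := by
    have hδηpos : (0:ℝ) < δ + η := by linarith
    have combo : (δ/(δ+η)) • q + (η/(δ+η)) • (p + (δ/η) • (p - q)) = p := by
      match_scalars <;> field_simp <;> ring
    have h2 := hconv.2 (Set.mem_setOf.2 hq) (Set.mem_setOf.2 hw')
      (show (0:ℝ) ≤ δ/(δ+η) by positivity) (show (0:ℝ) ≤ η/(δ+η) by positivity)
      (show δ/(δ+η) + η/(δ+η) = 1 by rw [← add_div, div_self hδηpos.ne'])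
    rw [combo] at h2
    simp only [smul_eq_mul] at h2
    have h3 : (η/(δ+η)) * ξ (p + (δ/η) • (p - q)) ≤ (η/(δ+η)) * M :=
      mul_le_mul_of_nonneg_left hw'M (by positivity)
    have h4 : ξ p ≤ (δ/(δ+η)) * ξ q + (η/(δ+η)) * M := by linarith
    have h5 : (δ+η) * ξ p ≤ δ * ξ q + η * M := by
      have h6 := mul_le_mul_of_nonneg_left h4 hδηpos.le
      calc (δ+η) * ξ p ≤ (δ+η) * ((δ/(δ+η)) * ξ q + (η/(δ+η)) * M) := h6
        _ = δ * ξ q + η * M := by field_simp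
    rw [div_mul_eq_mul_div, le_div_iff₀ hδ]
    nlinarith
  rw [abs_le]; constructor <;> nlinarith


/-- Sequential lower semicontinuity of `ξ` on the PSD cone. -/
lemma lsc (ξ : Mat D → ℝ) (g : Mat D → Mat D)
    (hdiff : ∀ x v : Mat D, HasDerivAt (fun s : ℝ => ξ (x + s • v)) (dotp (g x) v) 0)
    (hconv : ConvexOn ℝ {x : Mat D | x.PosSemidef} ξ)
    (hmono : ∀ a b : Mat D, a.PosSemidef → b.PosSemidef → (a - b).PosSemidef → ξ b ≤ ξ a)
    {c : Mat D} (hc : c.PosSemidef) {u : ℕ → Mat D} (hu : ∀ n, (u n).PosSemidef)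
    (hconvg : Tendsto (fun n => fnorm (u n - c)) atTop (𝓝 0))
    {ε : ℝ} (hε : 0 < ε) : ∀ᶠ n in atTop, ξ c - ε ≤ ξ (u n) := by
  -- continuity of F at 0
  set z : Mat D := c + 1 with hz
  have hφ : ContinuousAt (fun t : ℝ => ξ (c + t • (1 : Mat D))) 0 := (hdiff c 1).continuousAt
  set F : ℝ → ℝ := fun t => (ξ (c + t • (1:Mat D)) - t * ξ z) / (1 - t) with hF
  have hFc : ContinuousAt F 0 := by
    apply ContinuousAt.div
    · exact hφ.sub (continuousAt_id.mul continuousAt_const)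
    · exact continuousAt_const.sub continuousAt_id
    · norm_num
  have hF0 : F 0 = ξ c := by simp [hF]
  -- pick t
  obtain ⟨δ', hδ', hball⟩ := Metric.continuousAt_iff.1 hFc (ε/2) (by linarith)
  set t : ℝ := min (δ'/2) (1/2) with ht
  have ht0 : 0 < t := by positivity
  have ht2 : t ≤ 1/2 := min_le_right _ _
  have htδ : dist t 0 < δ' := by
    rw [Real.dist_eq, sub_zero, abs_of_pos ht0]
    calc t ≤ δ'/2 := min_le_left _ _
      _ < δ' := by linarith
  have hFt : |F t - ξ c| < ε/2 := by
    have := hball htδ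
    rwa [Real.dist_eq, hF0] at this
  -- the PD point p = c + t•1
  have hzpsd : z.PosSemidef := by
    have h1 : ((1:Mat D)).PosSemidef := by simpa using psd_smul_one (zero_le_one (α := ℝ))
    exact hc.add h1
  set p : Mat D := c + t • (1:Mat D) with hpdef
  have hpsub : (p - t • (1:Mat D)).PosSemidef := by
    have : p - t • (1:Mat D) = c := by rw [hpdef]; abel
    rw [this]; exact hc
  have hppsd : p.PosSemidef := hc.add (psd_smul_one ht0.le)
  set C : ℝ := ξ (p + t • (1:Mat D)) - ξ p with hCdef
  have hC : 0 ≤ C := by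
    have h1 : ((p + t • (1:Mat D)) - p).PosSemidef := by
      have : (p + t • (1:Mat D)) - p = t • (1:Mat D) := by abel
      rw [this]; exact psd_smul_one ht0.le
    have := hmono _ _ (hppsd.add (psd_smul_one ht0.le)) hppsd h1
    linarith
  set ρ : ℝ := min t ((ε/4) * t / (C+1)) with hρdef
  have hρ : 0 < ρ := by
    apply lt_min ht0
    positivity
  have h1t : (0:ℝ) < 1 - t := by linarith
  filter_upwards [hconvg (Iio_mem_nhds hρ)] with n hn
  have hn' : fnorm (u n - c) < ρ := hn
  set qn : Mat D := (1-t) • (u n) + t • z with hqdef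
  have hqpsd : qn.PosSemidef := psd_convex (hu n) hzpsd h1t.le ht0.le
  have hqp : qn - p = (1-t) • (u n - c) := by
    rw [hqdef, hpdef, hz]; module
  have hfq : fnorm (qn - p) = (1-t) * fnorm (u n - c) := by
    rw [hqp, fnorm_smul, abs_of_pos h1t]
  have hfq2 : fnorm (qn - p) < ρ := by
    rw [hfq]
    calc (1-t) * fnorm (u n - c) ≤ 1 * fnorm (u n - c) :=
          mul_le_mul_of_nonneg_right (by linarith) (fnorm_nonneg _)
      _ = fnorm (u n - c) := one_mul _
      _ < ρ := hn'
  have hest := cont_est ξ hconv hmono ht0 hpsub hqpsd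
    (le_trans hfq2.le (min_le_left _ _))
  rw [← hCdef] at hest
  have hq3 : (fnorm (qn - p) / t) * C ≤ ε/4 := by
    rw [div_mul_eq_mul_div, div_le_iff₀ ht0]
    have h1 : fnorm (qn - p) ≤ (ε/4) * t / (C+1) := le_trans hfq2.le (min_le_right _ _)
    have h2 : fnorm (qn - p) * C ≤ ((ε/4) * t / (C+1)) * C :=
      mul_le_mul_of_nonneg_right h1 hC
    have h3 : ((ε/4) * t / (C+1)) * C ≤ (ε/4) * t := by
      rw [div_mul_eq_mul_div, div_le_iff₀ (by linarith : (0:ℝ) < C+1)]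
      nlinarith
    linarith
  have hqlow : ξ p - ε/4 ≤ ξ qn := by
    have := (abs_le.1 (le_trans hest hq3)).1
    linarith
  -- convexity
  have hcx := hconv.2 (Set.mem_setOf.2 (hu n)) (Set.mem_setOf.2 hzpsd)
    (show (0:ℝ) ≤ 1 - t by linarith) (show (0:ℝ) ≤ t from ht0.le)
    (show (1 - t) + t = 1 by ring)
  rw [← hqdef] at hcx
  simp only [smul_eq_mul] at hcx
  -- F t in terms of p
  have hFt_eq : F t = (ξ p - t * ξ z)/(1-t) := rfl
  have hkey : (1-t) * F t = ξ p - t * ξ z := by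
    rw [hFt_eq]; field_simp
  have hd4 : (1-t) * ((ε/4)/(1-t)) = ε/4 := by field_simp
  have hstep : F t - (ε/4)/(1-t) ≤ ξ (u n) := by
    nlinarith [hqlow, hcx, hkey, hd4, h1t]
  have hd2 : (ε/4)/(1-t) ≤ ε/2 := by
    rw [div_le_iff₀ h1t]
    nlinarith
  have hFlow : ξ c - ε/2 ≤ F t := by
    have := (abs_le.1 hFt.le).1
    linarith
  linarith


lemma psd_zero : (0 : Mat D).PosSemidef := by
  simpa using psd_smul_one (le_refl (0:ℝ))

lemma bdd (ξ : Mat D → ℝ)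
    (hconv : ConvexOn ℝ {x : Mat D | x.PosSemidef} ξ)
    (hmono : ∀ a b : Mat D, a.PosSemidef → b.PosSemidef → (a - b).PosSemidef → ξ b ≤ ξ a)
    (hsl : Superlinear ξ) (a : Mat D) :
    ∃ K0 : ℝ, ∀ b : Mat D, b.PosSemidef → dotp a b - ξ b ≤ K0 := by
  obtain ⟨R, hRpos, hR⟩ := hsl (fnorm a + 1) (by linarith [fnorm_nonneg a])
  refine ⟨max 0 (fnorm a * R - (2 * ξ (R • (1:Mat D)) - ξ ((2*R) • (1:Mat D)))), ?_⟩
  intro b hb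
  rcases le_or_gt (fnorm b) R with h | h
  · have h1 := dotp_le a b
    have h2 : fnorm a * fnorm b ≤ fnorm a * R := mul_le_mul_of_nonneg_left h (fnorm_nonneg a)
    have h3 := lbound ξ hconv hmono hb h
    have : dotp a b - ξ b ≤ fnorm a * R - (2 * ξ (R • (1:Mat D)) - ξ ((2*R) • (1:Mat D))) := by
      linarith
    exact le_trans this (le_max_right _ _)
  · have h1 := hR b hb h.le
    have h2 := dotp_le a b
    have : dotp a b - ξ b ≤ 0 := by nlinarith [fnorm_nonneg b]
    exact le_trans this (le_max_left _ _)

lemma bddAbove_obj (ξ : Mat D → ℝ)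
    (hconv : ConvexOn ℝ {x : Mat D | x.PosSemidef} ξ)
    (hmono : ∀ a b : Mat D, a.PosSemidef → b.PosSemidef → (a - b).PosSemidef → ξ b ≤ ξ a)
    (hsl : Superlinear ξ) (a : Mat D) :
    BddAbove ((fun b => dotp a b - ξ b) '' {b : Mat D | b.PosSemidef}) := by
  obtain ⟨K0, hK0⟩ := bdd ξ hconv hmono hsl a
  refine ⟨K0, ?_⟩
  rintro _ ⟨b, hb, rfl⟩
  exact hK0 b hb

lemma xiStar_ge (ξ : Mat D → ℝ)
    (hconv : ConvexOn ℝ {x : Mat D | x.PosSemidef} ξ)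
    (hmono : ∀ a b : Mat D, a.PosSemidef → b.PosSemidef → (a - b).PosSemidef → ξ b ≤ ξ a)
    (hsl : Superlinear ξ) (a : Mat D) {b : Mat D} (hb : b.PosSemidef) :
    dotp a b - ξ b ≤ xiStarR ξ a :=
  le_csSup (bddAbove_obj ξ hconv hmono hsl a) ⟨b, hb, rfl⟩

lemma exists_max (ξ : Mat D → ℝ) (g : Mat D → Mat D)
    (hdiff : ∀ x v : Mat D, HasDerivAt (fun s : ℝ => ξ (x + s • v)) (dotp (g x) v) 0)
    (hconv : ConvexOn ℝ {x : Mat D | x.PosSemidef} ξ)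
    (hmono : ∀ a b : Mat D, a.PosSemidef → b.PosSemidef → (a - b).PosSemidef → ξ b ≤ ξ a)
    (hsl : Superlinear ξ) (a : Mat D) :
    ∃ bs : Mat D, bs.PosSemidef ∧ xiStarR ξ a = dotp a bs - ξ bs ∧
      ∀ b : Mat D, b.PosSemidef → dotp a b - ξ b ≤ dotp a bs - ξ bs := by
  have hne : ((fun b => dotp a b - ξ b) '' {b : Mat D | b.PosSemidef}).Nonempty :=
    ⟨_, ⟨0, psd_zero, rfl⟩⟩
  have hbdd := bddAbove_obj ξ hconv hmono hsl a
  set S := xiStarR ξ a with hSdef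
  have hub : ∀ b : Mat D, b.PosSemidef → dotp a b - ξ b ≤ S :=
    fun b hb => xiStar_ge ξ hconv hmono hsl a hb
  have hS0 : -ξ 0 ≤ S := by
    have := hub 0 psd_zero
    simpa [dotp_zero_right] using this
  have hseq : ∀ n : ℕ, ∃ b : Mat D, b.PosSemidef ∧ S - 1/((n:ℝ)+1) < dotp a b - ξ b := by
    intro n
    have hpos : (0:ℝ) < 1/((n:ℝ)+1) := by positivity
    have hlt : S - 1/((n:ℝ)+1) < S := by linarith
    obtain ⟨y, hy, hlt'⟩ := exists_lt_of_lt_csSup hne hlt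
    obtain ⟨b, hb, rfl⟩ := hy
    exact ⟨b, hb, hlt'⟩
  choose u hu1 hu2 using hseq
  obtain ⟨R, hRpos, hR⟩ := hsl (fnorm a + 1) (by linarith [fnorm_nonneg a])
  have hubnd : ∀ n, fnorm (u n) ≤ max R (|ξ 0| + 1) := by
    intro n
    rcases le_or_gt (fnorm (u n)) R with h | h
    · exact le_trans h (le_max_left _ _)
    · have h1 := hR (u n) (hu1 n) h.le
      have h2 := dotp_le a (u n)
      have h3 := hu2 n
      have h4 : dotp a (u n) - ξ (u n) ≤ - fnorm (u n) := by nlinarith [fnorm_nonneg (u n)]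
      have h6 : 1/((n:ℝ)+1) ≤ 1 := by
        rw [div_le_one (by positivity)]
        have : (0:ℝ) ≤ (n:ℝ) := Nat.cast_nonneg n
        linarith
      have h7 := le_abs_self (ξ 0)
      have : fnorm (u n) ≤ |ξ 0| + 1 := by linarith
      exact le_trans this (le_max_right _ _)
  obtain ⟨c, ψ, hcpsd, hψ, hconvg⟩ := exists_subseq_tendsto u _ hubnd hu1
  have hdp : Tendsto (fun n => dotp a (u (ψ n))) atTop (𝓝 (dotp a c)) := tendsto_dotp a hconvg
  have hSle : S ≤ dotp a c - ξ c := by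
    apply le_of_forall_pos_le_add
    intro ε hε
    have hlsc := lsc ξ g hdiff hconv hmono hcpsd (fun n => hu1 (ψ n)) hconvg (half_pos hε)
    have hev : ∀ᶠ n : ℕ in atTop,
        S - 1/((n:ℝ)+1) ≤ dotp a (u (ψ n)) - ξ c + ε/2 := by
      filter_upwards [hlsc] with n hn
      have h3 := hu2 (ψ n)
      have hψn : ((n:ℝ)+1) ≤ ((ψ n : ℝ)+1) := by
        have hna : n ≤ ψ n := hψ.le_apply
        have : (n:ℝ) ≤ (ψ n : ℝ) := by exact_mod_cast hna
        linarith
      have h4 : 1/((ψ n : ℝ)+1) ≤ 1/((n:ℝ)+1) :=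
        one_div_le_one_div_of_le (by positivity) hψn
      linarith
    have hlim1 : Tendsto (fun n : ℕ => S - 1/((n:ℝ)+1)) atTop (𝓝 S) := by
      have h := tendsto_one_div_add_atTop_nhds_zero_nat (𝕜 := ℝ)
      have := (tendsto_const_nhds (x := S) (f := atTop)).sub h
      simpa using this
    have hlim2 : Tendsto (fun n => dotp a (u (ψ n)) - ξ c + ε/2) atTop
        (𝓝 (dotp a c - ξ c + ε/2)) :=
      (hdp.sub tendsto_const_nhds).add tendsto_const_nhds
    have := le_of_tendsto_of_tendsto hlim1 hlim2 hev
    linarith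
  exact ⟨c, hcpsd, le_antisymm hSle (hub c hcpsd),
    fun b hb => le_trans (hub b hb) hSle⟩

lemma max_unique (ξ : Mat D → ℝ)
    (hsconv : StrictConvexOn ℝ {x : Mat D | x.PosSemidef} ξ)
    (a : Mat D) {b1 b2 : Mat D} (hb1 : b1.PosSemidef) (hb2 : b2.PosSemidef)
    (hm1 : ∀ b : Mat D, b.PosSemidef → dotp a b - ξ b ≤ dotp a b1 - ξ b1)
    (hm2 : ∀ b : Mat D, b.PosSemidef → dotp a b - ξ b ≤ dotp a b2 - ξ b2) :
    b1 = b2 := by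
  by_contra hne
  have heq : dotp a b1 - ξ b1 = dotp a b2 - ξ b2 :=
    le_antisymm (hm2 b1 hb1) (hm1 b2 hb2)
  have hmpsd := psd_convex hb1 hb2 (by norm_num : (0:ℝ) ≤ 1/2) (by norm_num : (0:ℝ) ≤ 1/2)
  have hstrict := hsconv.2 (Set.mem_setOf.2 hb1) (Set.mem_setOf.2 hb2) hne
    (show (0:ℝ) < 1/2 by norm_num) (show (0:ℝ) < 1/2 by norm_num) (by norm_num)
  simp only [smul_eq_mul] at hstrict
  have hdp : dotp a ((1/2:ℝ) • b1 + (1/2:ℝ) • b2)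
      = (1/2) * dotp a b1 + (1/2) * dotp a b2 := by
    rw [dotp_add_right, dotp_smul_right, dotp_smul_right]
  have hle := hm1 _ hmpsd
  rw [hdp] at hle
  linarith



lemma fnorm_zero : fnorm (0 : Mat D) = 0 := by
  simp [fnorm, dotp]

lemma dotp_add_smul_left (y v b : Mat D) (s : ℝ) :
    dotp (y + s • v) b = dotp y b + s * dotp v b := by
  rw [dotp_comm, dotp_add_right, dotp_smul_right, dotp_comm b y, dotp_comm b v]

/-- joint convergence of the pairing. -/
lemma tendsto_dotp2 {a : Mat D} {as : ℕ → Mat D}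
    (ha : Tendsto (fun n => fnorm (as n - a)) atTop (𝓝 0))
    {u : ℕ → Mat D} {c : Mat D}
    (hu : Tendsto (fun n => fnorm (u n - c)) atTop (𝓝 0)) :
    Tendsto (fun n => dotp (as n) (u n)) atTop (𝓝 (dotp a c)) := by
  have hexp : ∀ n, dotp (as n) (u n) = dotp a c
      + (dotp (as n - a) (u n - c) + dotp (as n - a) c + dotp a (u n - c)) := by
    intro n
    have e1 : dotp (as n) (u n) = dotp (a + (as n - a)) (c + (u n - c)) := by
      congr 1 <;> abel
    rw [e1, dotp_comm, dotp_add_right, dotp_comm (c + (u n - c)) a,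
      dotp_comm (c + (u n - c)) (as n - a), dotp_add_right, dotp_add_right]
    ring
  have hz : Tendsto (fun n => dotp (as n - a) (u n - c) + dotp (as n - a) c
      + dotp a (u n - c)) atTop (𝓝 0) := by
    have t1 : Tendsto (fun n => dotp (as n - a) (u n - c)) atTop (𝓝 0) := by
      apply squeeze_zero_norm (a := fun n => fnorm (as n - a) * fnorm (u n - c))
        (fun n => abs_dotp_le _ _)
      simpa using ha.mul hu
    have t2 : Tendsto (fun n => dotp (as n - a) c) atTop (𝓝 0) := by
      apply squeeze_zero_norm (a := fun n => fnorm (as n - a) * fnorm c)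
        (fun n => abs_dotp_le _ _)
      simpa using ha.mul_const (fnorm c)
    have t3 : Tendsto (fun n => dotp a (u n - c)) atTop (𝓝 0) := by
      apply squeeze_zero_norm (a := fun n => fnorm a * fnorm (u n - c))
        (fun n => abs_dotp_le _ _)
      simpa using hu.const_mul (fnorm a)
    simpa using (t1.add t2).add t3
  have := (tendsto_const_nhds (x := dotp a c) (f := atTop (α := ℕ))).add hz
  rw [add_zero] at this
  convert this using 1
  funext n
  exact hexp n


end Aux

open Aux Matrix Filter Topology in
theorem grad_xiStar_comp_grad_xi
    (D : ℕ) (hD : 1 ≤ D) (ξ : Mat D → ℝ) (g : Mat D → Mat D)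
    (hdiff : ∀ x v : Mat D, HasDerivAt (fun s : ℝ => ξ (x + s • v)) (dotp (g x) v) 0)
    (hsconv : StrictConvexOn ℝ {x : Mat D | x.PosSemidef} ξ)
    (hmono : ∀ a b : Mat D, a.PosSemidef → b.PosSemidef → (a - b).PosSemidef → ξ b ≤ ξ a)
    (hsl : Superlinear ξ)
    (hgsymm : ∀ x : Mat D, x.IsSymm → (g x).IsSymm) :
    ∃ gstar : Mat D → Mat D,
      (∀ y : Mat D, y.IsSymm → (gstar y).IsSymm) ∧
      (∀ y v : Mat D, y.IsSymm → v.IsSymm →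
        HasDerivAt (fun s : ℝ => xiStarR ξ (y + s • v)) (dotp (gstar y) v) 0) ∧
      (∀ x : Mat D, x.PosSemidef → gstar (g x) = x) := by
  have hconv : ConvexOn ℝ {x : Mat D | x.PosSemidef} ξ := hsconv.convexOn
  choose bmax hbpsd hbval hbmax using
    fun a : Mat D => Aux.exists_max ξ g hdiff hconv hmono hsl a
  have huniq : ∀ a b : Mat D, b.PosSemidef →
      (∀ b' : Mat D, b'.PosSemidef → dotp a b' - ξ b' ≤ dotp a b - ξ b) → b = bmax a :=
    fun a b hb hm => Aux.max_unique ξ hsconv a hb (hbpsd a) hm (hbmax a)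
  -- continuity of bmax
  have hcont : ∀ a : Mat D, ∀ ε : ℝ, 0 < ε → ∃ δ : ℝ, 0 < δ ∧
      ∀ a' : Mat D, fnorm (a' - a) ≤ δ → fnorm (bmax a' - bmax a) ≤ ε := by
    intro a ε hε
    by_contra hcon
    push_neg at hcon
    have hseq : ∀ n : ℕ, ∃ a' : Mat D, fnorm (a' - a) ≤ 1/((n:ℝ)+1)
        ∧ ε < fnorm (bmax a' - bmax a) := by
      intro n
      obtain ⟨a', h1, h2⟩ := hcon (1/((n:ℝ)+1)) (by positivity)
      exact ⟨a', h1, h2⟩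
    choose asq ha1 ha2 using hseq
    obtain ⟨R, hRpos, hR⟩ := hsl (fnorm a + 2) (by linarith [fnorm_nonneg a])
    have hfa : ∀ n, fnorm (asq n) ≤ fnorm a + 1 := by
      intro n
      have h6 : 1/((n:ℝ)+1) ≤ 1 := by
        rw [div_le_one (by positivity)]
        have : (0:ℝ) ≤ (n:ℝ) := Nat.cast_nonneg n
        linarith
      calc fnorm (asq n) = fnorm (a + (asq n - a)) := by rw [show a + (asq n - a) = asq n by abel]
        _ ≤ fnorm a + fnorm (asq n - a) := fnorm_add_le _ _
        _ ≤ fnorm a + 1 := by linarith [ha1 n]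
    have hbnd : ∀ n, fnorm (bmax (asq n)) ≤ max R |ξ 0| := by
      intro n
      rcases le_or_gt (fnorm (bmax (asq n))) R with h | h
      · exact le_trans h (le_max_left _ _)
      · have h1 := hR _ (hbpsd (asq n)) h.le
        have h2 := dotp_le (asq n) (bmax (asq n))
        have h0 := hbmax (asq n) 0 psd_zero
        rw [dotp_zero_right] at h0
        have h4 : fnorm (asq n) * fnorm (bmax (asq n)) ≤ (fnorm a + 1) * fnorm (bmax (asq n)) :=
          mul_le_mul_of_nonneg_right (hfa n) (fnorm_nonneg _)
        have h5 : fnorm (bmax (asq n)) ≤ ξ 0 := by nlinarith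
        exact le_trans (le_trans h5 (le_abs_self _)) (le_max_right _ _)
    obtain ⟨c, ψ, hcpsd, hψ, hconvg⟩ :=
      Aux.exists_subseq_tendsto _ _ hbnd (fun n => hbpsd (asq n))
    have hasq : Tendsto (fun n => fnorm (asq (ψ n) - a)) atTop (𝓝 0) := by
      apply squeeze_zero (fun n => fnorm_nonneg _) (g := fun n : ℕ => 1/((n:ℝ)+1))
        (fun n => ?_) tendsto_one_div_add_atTop_nhds_zero_nat
      have hna : n ≤ ψ n := hψ.le_apply
      have hcast : ((n:ℝ)+1) ≤ ((ψ n : ℝ)+1) := by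
        have : (n:ℝ) ≤ (ψ n : ℝ) := by exact_mod_cast hna
        linarith
      exact le_trans (ha1 (ψ n)) (one_div_le_one_div_of_le (by positivity) hcast)
    have hcmax : ∀ b : Mat D, b.PosSemidef → dotp a b - ξ b ≤ dotp a c - ξ c := by
      intro b hb
      apply le_of_forall_pos_le_add
      intro ε' hε'
      have hlsc := Aux.lsc ξ g hdiff hconv hmono hcpsd (fun n => hbpsd (asq (ψ n)))
        hconvg (ε := ε'/2) (by linarith)
      have hWt : Tendsto (fun n => dotp (asq (ψ n)) (bmax (asq (ψ n)))
          - dotp (asq (ψ n)) b + ξ b) atTop (𝓝 (dotp a c - dotp a b + ξ b)) := by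
        have t1 := tendsto_dotp2 hasq hconvg
        have t2 : Tendsto (fun n => dotp (asq (ψ n)) b) atTop (𝓝 (dotp a b)) := by
          apply tendsto_dotp2 hasq
          simpa [fnorm_zero] using tendsto_const_nhds (x := (0:ℝ)) (f := atTop (α := ℕ))
        exact (t1.sub t2).add tendsto_const_nhds
      have hev : ∀ᶠ n : ℕ in atTop, ξ c - ε'/2 ≤ dotp (asq (ψ n)) (bmax (asq (ψ n)))
          - dotp (asq (ψ n)) b + ξ b := by
        filter_upwards [hlsc] with n hn
        have hineq := hbmax (asq (ψ n)) b hb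
        linarith
      have hlim := le_of_tendsto_of_tendsto
        (tendsto_const_nhds (x := ξ c - ε'/2) (f := atTop (α := ℕ))) hWt hev
      linarith
    have hceq : c = bmax a := huniq a c hcpsd hcmax
    obtain ⟨n, hn'⟩ := (show ∀ᶠ n in atTop, fnorm (bmax (asq (ψ n)) - c) < ε from
      hconvg (gt_mem_nhds hε)).exists
    have := ha2 (ψ n)
    rw [← hceq] at this
    linarith
  -- differentiability
  have hderiv : ∀ y v : Mat D,
      HasDerivAt (fun s : ℝ => xiStarR ξ (y + s • v)) (dotp (bmax y) v) 0 := by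
    intro y v
    rw [hasDerivAt_iff_isLittleO, Asymptotics.isLittleO_iff]
    intro C hC
    have hfv1 : (0:ℝ) < fnorm v + 1 := by linarith [fnorm_nonneg v]
    obtain ⟨δ, hδ, hδc⟩ := hcont y (C/(fnorm v + 1)) (div_pos hC hfv1)
    rw [Metric.eventually_nhds_iff]
    refine ⟨δ/(fnorm v + 1), div_pos hδ hfv1, ?_⟩
    intro s hs
    have habs : |s| < δ/(fnorm v+1) := by rwa [Real.dist_eq, sub_zero] at hs
    have hsv : fnorm (y + s • v - y) ≤ δ := by
      rw [show y + s • v - y = s • v by abel, fnorm_smul]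
      calc |s| * fnorm v ≤ |s| * (fnorm v + 1) :=
            mul_le_mul_of_nonneg_left (by linarith) (abs_nonneg s)
        _ ≤ (δ/(fnorm v+1)) * (fnorm v + 1) :=
            mul_le_mul_of_nonneg_right habs.le hfv1.le
        _ = δ := div_mul_cancel₀ δ hfv1.ne'
    have hb1 := hδc _ hsv
    have low : xiStarR ξ y + s * dotp v (bmax y) ≤ xiStarR ξ (y + s • v) := by
      have h1 := xiStar_ge ξ hconv hmono hsl (y + s • v) (hbpsd y)
      rw [dotp_add_smul_left] at h1
      have h2 := hbval y
      linarith
    have high : xiStarR ξ (y + s • v) - xiStarR ξ y ≤ s * dotp v (bmax (y + s • v)) := by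
      have h1 := hbval (y + s • v)
      rw [dotp_add_smul_left] at h1
      have h2 := xiStar_ge ξ hconv hmono hsl y (hbpsd (y + s • v))
      linarith
    have hdiffb : s * dotp v (bmax (y + s • v)) - s * dotp v (bmax y)
        = s * dotp v (bmax (y + s • v) - bmax y) := by
      rw [dotp_sub_right]; ring
    have hbound : |s * dotp v (bmax (y + s • v) - bmax y)| ≤ C * |s| := by
      rw [abs_mul]
      have h3 := abs_dotp_le v (bmax (y + s • v) - bmax y)
      have h4 : fnorm v * fnorm (bmax (y + s • v) - bmax y) ≤ fnorm v * (C/(fnorm v+1)) :=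
        mul_le_mul_of_nonneg_left hb1 (fnorm_nonneg v)
      have h5 : fnorm v * (C/(fnorm v+1)) ≤ C := by
        rw [← mul_div_assoc, div_le_iff₀ hfv1]
        nlinarith [fnorm_nonneg v]
      calc |s| * |dotp v (bmax (y + s • v) - bmax y)| ≤ |s| * C := by
            apply mul_le_mul_of_nonneg_left _ (abs_nonneg s)
            linarith
        _ = C * |s| := mul_comm _ _
    -- final estimate
    have hE : 0 ≤ xiStarR ξ (y + s • v) - xiStarR ξ y - s * dotp v (bmax y) := by linarith
    have hE2 : xiStarR ξ (y + s • v) - xiStarR ξ y - s * dotp v (bmax y)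
        ≤ s * dotp v (bmax (y + s • v) - bmax y) := by
      rw [← hdiffb]; linarith
    have : ‖xiStarR ξ (y + s • v) - xiStarR ξ (y + (0:ℝ) • v) - (s - 0) • dotp (bmax y) v‖
        ≤ C * ‖s - 0‖ := by
      simp only [zero_smul, add_zero, sub_zero, smul_eq_mul, Real.norm_eq_abs]
      rw [dotp_comm (bmax y) v]
      rw [abs_of_nonneg hE]
      calc xiStarR ξ (y + s • v) - xiStarR ξ y - s * dotp v (bmax y)
          ≤ s * dotp v (bmax (y + s • v) - bmax y) := hE2
        _ ≤ |s * dotp v (bmax (y + s • v) - bmax y)| := le_abs_self _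
        _ ≤ C * |s| := hbound
    exact this
  refine ⟨bmax, ?_, ?_, ?_⟩
  · intro y _
    exact psd_symm (hbpsd y)
  · intro y v _ _
    exact hderiv y v
  · intro x hx
    have hmx : ∀ b : Mat D, b.PosSemidef → dotp (g x) b - ξ b ≤ dotp (g x) x - ξ x := by
      intro b hb
      have := Aux.grad_ineq ξ g hdiff hconv hx hb
      rw [dotp_sub_right] at this
      linarith
    exact (huniq (g x) x hx hmx).symm

end
end

section
/- Let D ≥ 1, let q ∈ Q_{∞,↑}, and let κ : [0,1) → S^D be Lipschitz with κ(0) = 0. Then there exists ε₀ > 0 such that for every ε ∈ (0, ε₀], the path q + εκ belongs to Q_{∞,↑}; in particular q + εκ takes values in S^D_+, is bounded, nondecreasing, vanishes at 0, and there is c' > 0 with (q+εκ)(v) − (q+εκ)(u) ≥ c'(v−u)·Id and Ellipt((q+εκ)(v) − (q+εκ)(u)) ≤ 1/c' for all 0 ≤ u < v < 1. -/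
/-!
STATEMENT 9: If `q ∈ Q_{∞,↑}` and `κ : [0,1) → S^D` is Lipschitz with `κ(0) = 0`, then there
exists `ε₀ > 0` such that for every `ε ∈ (0, ε₀]` the path `q + εκ` belongs to `Q_{∞,↑}`;
i.e. it takes values in `S^D_+`, is bounded, nondecreasing, càdlàg, vanishes at `0`, and
there is `c' > 0` such that `(q+εκ)(v) − (q+εκ)(u) ≥ c'(v−u)·Id` and
`Ellipt((q+εκ)(v) − (q+εκ)(u)) ≤ 1/c'` for all `0 ≤ u < v < 1`. Paths are modeled as
functions on `ℝ` and all conditions are imposed on `[0,1)`.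
-/

noncomputable section

/-- The largest eigenvalue of a matrix. -/
def lamMax {D : ℕ} (a : Mat D) : ℝ :=
  sSup {t : ℝ | ∃ v : Fin D → ℝ, v ≠ 0 ∧ a.mulVec v = t • v}

/-- The smallest eigenvalue of a matrix. -/
def lamMin {D : ℕ} (a : Mat D) : ℝ :=
  sInf {t : ℝ | ∃ v : Fin D → ℝ, v ≠ 0 ∧ a.mulVec v = t • v}

/-- `q` is càdlàg on `[0,1)`: right-continuous on `[0,1)` with left limits on `(0,1)`. -/
def Cadlag {D : ℕ} (q : ℝ → Mat D) : Prop :=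
  (∀ u ∈ Set.Ico (0:ℝ) 1, ContinuousWithinAt q (Set.Ici u) u) ∧
  (∀ u ∈ Set.Ioo (0:ℝ) 1, ∃ L : Mat D, Filter.Tendsto q (nhdsWithin u (Set.Iio u)) (nhds L))

/-- `q ∈ Q_{∞,↑}`: a bounded càdlàg nondecreasing path `[0,1) → S^D_+` with `q(0) = 0`,
such that for some `c > 0` and all `0 ≤ u < v < 1`, `q(v) − q(u) ≥ c(v−u)·Id` and
`Ellipt(q(v) − q(u)) = λ_max(q(v)−q(u))/λ_min(q(v)−q(u)) ≤ 1/c`. -/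
def IsQInftyUp {D : ℕ} (q : ℝ → Mat D) : Prop :=
  (∀ u ∈ Set.Ico (0:ℝ) 1, (q u).PosSemidef) ∧
  (∃ C : ℝ, ∀ u ∈ Set.Ico (0:ℝ) 1, fnorm (q u) ≤ C) ∧
  (∀ u v : ℝ, 0 ≤ u → u ≤ v → v < 1 → (q v - q u).PosSemidef) ∧
  Cadlag q ∧
  q 0 = 0 ∧
  (∃ c : ℝ, 0 < c ∧ ∀ u v : ℝ, 0 ≤ u → u < v → v < 1 →
    ((q v - q u) - (c * (v - u)) • (1 : Mat D)).PosSemidef ∧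
    lamMax (q v - q u) / lamMin (q v - q u) ≤ 1 / c)

namespace QAux
open Matrix

variable {D : ℕ}

/-! ### Frobenius norm basics via the Euclidean space embedding -/

def emb {D : ℕ} (a : Mat D) : EuclideanSpace ℝ (Fin D × Fin D) :=
  (WithLp.equiv 2 _).symm (fun p => a p.1 p.2)

lemma emb_add (a b : Mat D) : emb (a + b) = emb a + emb b := rfl
lemma emb_smul (r : ℝ) (a : Mat D) : emb (r • a) = r • emb a := rfl

lemma dotp_eq_inner (a b : Mat D) : dotp a b = inner ℝ (emb a) (emb b) := by
  simp [dotp, emb, PiLp.inner_apply, RCLike.inner_apply, Fintype.sum_prod_type, mul_comm]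

lemma fnorm_eq_norm (a : Mat D) : fnorm a = ‖emb a‖ := by
  rw [fnorm, dotp_eq_inner, real_inner_self_eq_norm_sq, Real.sqrt_sq (norm_nonneg _)]

lemma fnorm_nonneg (a : Mat D) : 0 ≤ fnorm a := Real.sqrt_nonneg _

lemma fnorm_add_le (a b : Mat D) : fnorm (a + b) ≤ fnorm a + fnorm b := by
  rw [fnorm_eq_norm, fnorm_eq_norm, fnorm_eq_norm, emb_add]; exact norm_add_le _ _

lemma fnorm_smul (r : ℝ) (a : Mat D) : fnorm (r • a) = |r| * fnorm a := by
  rw [fnorm_eq_norm, fnorm_eq_norm, emb_smul, norm_smul, Real.norm_eq_abs]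

/-! ### Quadratic form bounds -/

open Matrix

def outer {D : ℕ} (x : Fin D → ℝ) : Mat D := Matrix.of (fun i j => x i * x j)

lemma quadform_eq (a : Mat D) (x : Fin D → ℝ) :
    x ⬝ᵥ a.mulVec x = dotp a (outer x) := by
  simp only [dotProduct, Matrix.mulVec, dotp, outer, Matrix.of_apply, Finset.mul_sum]
  refine Finset.sum_congr rfl fun i _ => Finset.sum_congr rfl fun j _ => by ring

lemma fnorm_outer (x : Fin D → ℝ) : fnorm (outer x) = x ⬝ᵥ x := by
  have h : dotp (outer x) (outer x) = (x ⬝ᵥ x) ^ 2 := by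
    simp only [dotp, outer, Matrix.of_apply, dotProduct, sq, Finset.sum_mul_sum]
    refine Finset.sum_congr rfl fun i _ => Finset.sum_congr rfl fun j _ => by ring
  rw [fnorm, h, Real.sqrt_sq]
  exact Finset.sum_nonneg fun i _ => mul_self_nonneg _

lemma abs_dotp_le (a b : Mat D) : |dotp a b| ≤ fnorm a * fnorm b := by
  rw [dotp_eq_inner, fnorm_eq_norm, fnorm_eq_norm]; exact abs_real_inner_le_norm _ _

lemma abs_quadform_le (a : Mat D) (x : Fin D → ℝ) :
    |x ⬝ᵥ a.mulVec x| ≤ fnorm a * (x ⬝ᵥ x) := by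
  rw [quadform_eq, ← fnorm_outer x]; exact abs_dotp_le a (outer x)

lemma entry_abs_le (a : Mat D) (i j : Fin D) : |a i j| ≤ fnorm a := by
  apply Real.abs_le_sqrt
  have h1 : a i j ^ 2 ≤ ∑ j', a i j' * a i j' := by
    rw [sq]
    exact Finset.single_le_sum (fun k _ => mul_self_nonneg (a i k)) (Finset.mem_univ j)
  refine h1.trans (Finset.single_le_sum (f := fun i' => ∑ j', a i' j' * a i' j')
    (fun k _ => Finset.sum_nonneg fun l _ => mul_self_nonneg _) (Finset.mem_univ i))

/-! ### The set of eigenvalues -/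

def spec {D : ℕ} (a : Mat D) : Set ℝ := {t : ℝ | ∃ v : Fin D → ℝ, v ≠ 0 ∧ a.mulVec v = t • v}

lemma dotProduct_self_pos {v : Fin D → ℝ} (hv : v ≠ 0) : 0 < v ⬝ᵥ v := by
  rcases lt_or_eq_of_le (Finset.sum_nonneg fun i _ => mul_self_nonneg (v i) :
    (0:ℝ) ≤ v ⬝ᵥ v) with h | h
  · exact h
  · exact absurd (dotProduct_self_eq_zero.mp h.symm) hv

lemma spec_lower {a : Mat D} {r : ℝ} (h : (a - r • (1 : Mat D)).PosSemidef)
    {t : ℝ} (ht : t ∈ spec a) : r ≤ t := by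
  obtain ⟨v, hv0, hv⟩ := ht
  have h2 := h.dotProduct_mulVec_nonneg v
  simp only [star_trivial, sub_mulVec, smul_mulVec, one_mulVec, hv,
    dotProduct_sub, dotProduct_smul, smul_eq_mul] at h2
  have hp := dotProduct_self_pos hv0
  nlinarith

lemma spec_upper {a : Mat D} {r : ℝ} (h : (r • (1 : Mat D) - a).PosSemidef)
    {t : ℝ} (ht : t ∈ spec a) : t ≤ r := by
  obtain ⟨v, hv0, hv⟩ := ht
  have h2 := h.dotProduct_mulVec_nonneg v
  simp only [star_trivial, sub_mulVec, smul_mulVec, one_mulVec, hv,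
    dotProduct_sub, dotProduct_smul, smul_eq_mul] at h2
  have hp := dotProduct_self_pos hv0
  nlinarith

lemma spec_abs_le {a : Mat D} {t : ℝ} (ht : t ∈ spec a) : |t| ≤ fnorm a := by
  obtain ⟨v, hv0, hv⟩ := ht
  have h2 := abs_quadform_le a v
  rw [hv] at h2
  have hp := dotProduct_self_pos hv0
  simp only [dotProduct_smul, smul_eq_mul, abs_mul] at h2
  rw [abs_of_pos hp] at h2
  exact le_of_mul_le_mul_right h2 hp

lemma spec_bddAbove (a : Mat D) : BddAbove (spec a) :=
  ⟨fnorm a, fun _ ht => (abs_le.mp (spec_abs_le ht)).2⟩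

lemma spec_bddBelow (a : Mat D) : BddBelow (spec a) :=
  ⟨-fnorm a, fun _ ht => (abs_le.mp (spec_abs_le ht)).1⟩

lemma spec_nonempty (hD : 1 ≤ D) {a : Mat D} (ha : a.IsHermitian) : (spec a).Nonempty := by
  have i : Fin D := ⟨0, hD⟩
  exact ⟨ha.eigenvalues i, ⇑(ha.eigenvectorBasis i),
    (WithLp.ofLp_eq_zero 2).ne.2 <| ha.eigenvectorBasis.orthonormal.ne_zero i, ha.mulVec_eigenvectorBasis i⟩

lemma eigenvalues_mem_spec {a : Mat D} (ha : a.IsHermitian) (i : Fin D) :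
    ha.eigenvalues i ∈ spec a :=
  ⟨⇑(ha.eigenvectorBasis i), (WithLp.ofLp_eq_zero 2).ne.2 <| ha.eigenvectorBasis.orthonormal.ne_zero i,
    ha.mulVec_eigenvectorBasis i⟩

/-! ### Positive semidefiniteness facts -/

lemma isHermitian_smul_one (r : ℝ) : (r • (1 : Mat D)).IsHermitian := by
  simp [Matrix.IsHermitian, Matrix.conjTranspose_smul, Matrix.isHermitian_one.eq]

lemma isHermitian_of_isSymm {m : Mat D} (h : m.IsSymm) : m.IsHermitian := by
  show mᴴ = m
  ext i j
  simp only [Matrix.conjTranspose_apply, star_trivial]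
  exact congrFun (congrFun h i) j

lemma isHermitian_real_smul (r : ℝ) {m : Mat D} (h : m.IsHermitian) :
    (r • m).IsHermitian := by
  rw [Matrix.IsHermitian, Matrix.conjTranspose_smul, star_trivial, h.eq]

lemma quadform_smul_one (r : ℝ) (x : Fin D → ℝ) :
    x ⬝ᵥ (r • (1 : Mat D)).mulVec x = r * (x ⬝ᵥ x) := by
  simp [smul_mulVec, one_mulVec, dotProduct_smul]

lemma psd_smul_one {r : ℝ} (hr : 0 ≤ r) : (r • (1 : Mat D)).PosSemidef := by
  refine Matrix.PosSemidef.of_dotProduct_mulVec_nonneg (isHermitian_smul_one r) fun x => ?_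
  rw [star_trivial, quadform_smul_one]
  exact mul_nonneg hr (Finset.sum_nonneg fun i _ => mul_self_nonneg _)

lemma psd_fnorm_one_sub {m : Mat D} (hm : m.IsHermitian) :
    ((fnorm m) • (1 : Mat D) - m).PosSemidef := by
  refine Matrix.PosSemidef.of_dotProduct_mulVec_nonneg ((isHermitian_smul_one _).sub hm) fun x => ?_
  have h := (abs_le.mp (abs_quadform_le m x)).2
  have hxx : (0:ℝ) ≤ x ⬝ᵥ x := Finset.sum_nonneg fun i _ => mul_self_nonneg _
  simp only [star_trivial, sub_mulVec, dotProduct_sub, quadform_smul_one]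
  nlinarith

lemma psd_add_fnorm_one {m : Mat D} (hm : m.IsHermitian) :
    (m + (fnorm m) • (1 : Mat D)).PosSemidef := by
  refine Matrix.PosSemidef.of_dotProduct_mulVec_nonneg (hm.add (isHermitian_smul_one _)) fun x => ?_
  have h := (abs_le.mp (abs_quadform_le m x)).1
  have hxx : (0:ℝ) ≤ x ⬝ᵥ x := Finset.sum_nonneg fun i _ => mul_self_nonneg _
  simp only [star_trivial, add_mulVec, dotProduct_add, quadform_smul_one]
  nlinarith

/-! ### Rayleigh-type bounds for `lamMax` and `lamMin` -/

lemma lamMax_smul_one_sub_psd {a : Mat D} (ha : a.IsHermitian) :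
    ((lamMax a) • (1 : Mat D) - a).PosSemidef := by
  have hb : ((lamMax a) • (1 : Mat D) - a).IsHermitian := (isHermitian_smul_one _).sub ha
  apply hb.posSemidef_iff_eigenvalues_nonneg.mpr
  intro i
  show 0 ≤ hb.eigenvalues i
  obtain ⟨v, hv0, hv⟩ := eigenvalues_mem_spec hb i
  set s := hb.eigenvalues i
  have hmem : lamMax a - s ∈ spec a := by
    refine ⟨v, hv0, ?_⟩
    have h1 : ((lamMax a) • (1 : Mat D) - a).mulVec v = (lamMax a) • v - a.mulVec v := by
      simp [sub_mulVec, smul_mulVec, one_mulVec]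
    rw [h1] at hv
    have h2 : a.mulVec v = (lamMax a) • v - s • v := by rw [← hv]; module
    rw [h2, sub_smul]
  have h3 : lamMax a - s ≤ lamMax a := le_csSup (spec_bddAbove a) hmem
  linarith

lemma sub_lamMin_smul_one_psd {a : Mat D} (ha : a.IsHermitian) :
    (a - (lamMin a) • (1 : Mat D)).PosSemidef := by
  have hb : (a - (lamMin a) • (1 : Mat D)).IsHermitian := ha.sub (isHermitian_smul_one _)
  apply hb.posSemidef_iff_eigenvalues_nonneg.mpr
  intro i
  show 0 ≤ hb.eigenvalues i
  obtain ⟨v, hv0, hv⟩ := eigenvalues_mem_spec hb i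
  set s := hb.eigenvalues i
  have hmem : s + lamMin a ∈ spec a := by
    refine ⟨v, hv0, ?_⟩
    have h1 : (a - (lamMin a) • (1 : Mat D)).mulVec v = a.mulVec v - (lamMin a) • v := by
      simp [sub_mulVec, smul_mulVec, one_mulVec]
    rw [h1] at hv
    rw [add_smul, ← hv]
    module
  have h3 : lamMin a ≤ s + lamMin a := csInf_le (spec_bddBelow a) hmem
  linarith

lemma le_lamMin (hD : 1 ≤ D) {a : Mat D} (ha : a.IsHermitian) {r : ℝ}
    (h : (a - r • (1 : Mat D)).PosSemidef) : r ≤ lamMin a :=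
  le_csInf (spec_nonempty hD ha) fun _ ht => spec_lower h ht

lemma lamMax_le (hD : 1 ≤ D) {a : Mat D} (ha : a.IsHermitian) {r : ℝ}
    (h : (r • (1 : Mat D) - a).PosSemidef) : lamMax a ≤ r :=
  csSup_le (spec_nonempty hD ha) fun _ ht => spec_upper h ht

/-! ### Continuity of Lipschitz paths -/

lemma tendsto_kappa {κ : ℝ → Mat D} {L : ℝ}
    (hκ : ∀ u ∈ Set.Ico (0:ℝ) 1, ∀ v ∈ Set.Ico (0:ℝ) 1, fnorm (κ v - κ u) ≤ L * |v - u|)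
    {u : ℝ} (hu : u ∈ Set.Ico (0:ℝ) 1) {l : Filter ℝ} (hl : l ≤ nhds u)
    (hev : ∀ᶠ v in l, v ∈ Set.Ico (0:ℝ) 1) :
    Filter.Tendsto κ l (nhds (κ u)) := by
  refine tendsto_pi_nhds.mpr ?_
  intro i
  rw [tendsto_pi_nhds]
  intro j
  have hb : ∀ᶠ v in l, |κ v i j - κ u i j| ≤ L * |v - u| := by
    filter_upwards [hev] with v hv
    calc |κ v i j - κ u i j| = |(κ v - κ u) i j| := by simp [Matrix.sub_apply]
    _ ≤ fnorm (κ v - κ u) := entry_abs_le _ i j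
    _ ≤ L * |v - u| := hκ u hu v hv
  have hg : Filter.Tendsto (fun v => L * |v - u|) l (nhds 0) := by
    have : Filter.Tendsto (fun v : ℝ => L * |v - u|) (nhds u) (nhds (L * |u - u|)) :=
      (continuous_const.mul ((continuous_id.sub continuous_const).abs)).tendsto u
    simpa using this.mono_left hl
  have hsub : Filter.Tendsto (fun v => κ v i j - κ u i j) l (nhds 0) :=
    squeeze_zero_norm' (by simpa [Real.norm_eq_abs] using hb) hg
  simpa using hsub.add_const (κ u i j)

end QAux


theorem add_small_lipschitz_mem_QInftyUp
    (D : ℕ) (hD : 1 ≤ D)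
    (q : ℝ → Mat D) (hq : IsQInftyUp q)
    (κ : ℝ → Mat D) (L : ℝ)
    (hκLip : ∀ u ∈ Set.Ico (0:ℝ) 1, ∀ v ∈ Set.Ico (0:ℝ) 1, fnorm (κ v - κ u) ≤ L * |v - u|)
    (hκsymm : ∀ u ∈ Set.Ico (0:ℝ) 1, (κ u).IsSymm)
    (hκ0 : κ 0 = 0) :
    ∃ ε₀ : ℝ, 0 < ε₀ ∧ ∀ ε : ℝ, 0 < ε → ε ≤ ε₀ →
      IsQInftyUp (fun u => q u + ε • κ u) := by
  obtain ⟨hpsd, ⟨C, hC⟩, hmono, ⟨hrc, hll⟩, h0, c, hc, hcb⟩ := hq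
  have hL : 0 ≤ L := by
    have h := hκLip 0 ⟨le_refl 0, by norm_num⟩ (1/2) ⟨by norm_num, by norm_num⟩
    have h2 := QAux.fnorm_nonneg (κ (1/2) - κ 0)
    rw [show |(1:ℝ)/2 - 0| = 1/2 by norm_num] at h
    linarith
  have hε₀pos : 0 < c / (2*(L+1)) := by positivity
  refine ⟨c / (2*(L+1)), hε₀pos, fun ε hε hεle => ?_⟩
  have hεL : ε * (L + 1) ≤ c / 2 := by
    have he : (c / (2*(L+1))) * (L+1) = c/2 := by field_simp
    calc ε * (L+1) ≤ (c / (2*(L+1))) * (L+1) :=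
      mul_le_mul_of_nonneg_right hεle (by linarith)
    _ = c/2 := he
  set f : ℝ → Mat D := fun u => q u + ε • κ u with hf
  have hzero : f 0 = 0 := by simp [hf, h0, hκ0]
  -- key increment estimates
  have key : ∀ u v : ℝ, 0 ≤ u → u < v → v < 1 →
      (((q v - q u) + ε • (κ v - κ u)) - ((c/2) * (v - u)) • (1:Mat D)).PosSemidef ∧
      lamMax ((q v - q u) + ε • (κ v - κ u)) / lamMin ((q v - q u) + ε • (κ v - κ u))
        ≤ 2/c + 1 := by
    intro u v hu huv hv
    have huI : u ∈ Set.Ico (0:ℝ) 1 := ⟨hu, lt_trans huv hv⟩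
    have hvI : v ∈ Set.Ico (0:ℝ) 1 := ⟨le_of_lt (lt_of_le_of_lt hu huv), hv⟩
    set a := q v - q u with hadef
    set k := κ v - κ u with hkdef
    set b := a + ε • k with hbdef
    have hk_herm : k.IsHermitian :=
      (QAux.isHermitian_of_isSymm (hκsymm v hvI)).sub (QAux.isHermitian_of_isSymm (hκsymm u huI))
    have hek_herm : (ε • k).IsHermitian := QAux.isHermitian_real_smul ε hk_herm
    have ha : a.IsHermitian := (hmono u v hu (le_of_lt huv) hv).1
    have hb_herm : b.IsHermitian := ha.add hek_herm
    obtain ⟨hm, hratio⟩ := hcb u v hu huv hv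
    set δ := ε * fnorm k with hδdef
    have hfknn := QAux.fnorm_nonneg k
    have hδnn : 0 ≤ δ := mul_nonneg (le_of_lt hε) hfknn
    have hvu : 0 < v - u := sub_pos.mpr huv
    have hfk : fnorm k ≤ L * (v - u) := by
      have h := hκLip u huI v hvI
      rwa [abs_of_pos hvu] at h
    have hδle : δ ≤ (c/2) * (v - u) := by
      have h1 : δ ≤ ε * (L * (v-u)) := mul_le_mul_of_nonneg_left hfk (le_of_lt hε)
      nlinarith
    have hfek : fnorm (ε • k) = δ := by rw [QAux.fnorm_smul, abs_of_pos hε]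
    have P1 : (ε • k + δ • (1:Mat D)).PosSemidef := by
      have h := QAux.psd_add_fnorm_one hek_herm; rwa [hfek] at h
    have P2 : (δ • (1:Mat D) - ε • k).PosSemidef := by
      have h := QAux.psd_fnorm_one_sub hek_herm; rwa [hfek] at h
    have fact1 : (b - (c * (v-u) - δ) • (1:Mat D)).PosSemidef := by
      have e : b - (c * (v-u) - δ) • (1:Mat D)
          = (a - (c * (v-u)) • (1:Mat D)) + (ε • k + δ • (1:Mat D)) := by
        rw [hbdef]; module
      rw [e]; exact hm.add P1
    constructor
    · have e2 : b - ((c/2) * (v-u)) • (1:Mat D)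
          = (b - (c * (v-u) - δ) • (1:Mat D))
            + ((c * (v-u) - δ - (c/2)*(v-u)) • (1:Mat D)) := by module
      rw [e2]
      exact fact1.add (QAux.psd_smul_one (by linarith))
    · set s := lamMin a with hsdef
      have hs_ge : c * (v - u) ≤ s := QAux.le_lamMin hD ha hm
      have hspos : 0 < s := lt_of_lt_of_le (by positivity) hs_ge
      have hmaxa : lamMax a ≤ 1/c * s := (div_le_iff₀ hspos).mp hratio
      have D1 : (b - (s - δ) • (1:Mat D)).PosSemidef := by
        have e : b - (s - δ) • (1:Mat D)
            = (a - s • (1:Mat D)) + (ε • k + δ • (1:Mat D)) := by rw [hbdef]; module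
        rw [e]; exact (QAux.sub_lamMin_smul_one_psd ha).add P1
      have hminb : s - δ ≤ lamMin b := QAux.le_lamMin hD hb_herm D1
      have E1 : ((lamMax a + δ) • (1:Mat D) - b).PosSemidef := by
        have e : (lamMax a + δ) • (1:Mat D) - b
            = ((lamMax a) • (1:Mat D) - a) + (δ • (1:Mat D) - ε • k) := by rw [hbdef]; module
        rw [e]; exact (QAux.lamMax_smul_one_sub_psd ha).add P2
      have hmaxb : lamMax b ≤ lamMax a + δ := QAux.lamMax_le hD hb_herm E1
      have hδs : δ ≤ s / 2 := by linarith
      have hminb_pos : 0 < lamMin b := by linarith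
      rw [div_le_iff₀ hminb_pos]
      have h21pos : (0:ℝ) < 2/c + 1 := by positivity
      have h3 : (2/c+1) * (s/2) ≤ (2/c+1) * (s - δ) :=
        mul_le_mul_of_nonneg_left (by linarith) (le_of_lt h21pos)
      have h3' : (2/c+1) * (s - δ) ≤ (2/c+1) * lamMin b :=
        mul_le_mul_of_nonneg_left hminb (le_of_lt h21pos)
      have h4 : (2/c+1) * (s/2) = 1/c*s + s/2 := by ring
      linarith
  -- nondecreasing
  have incr : ∀ u v : ℝ, 0 ≤ u → u ≤ v → v < 1 → (f v - f u).PosSemidef := by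
    intro u v hu huv hv
    rcases eq_or_lt_of_le huv with rfl | hlt
    · rw [sub_self]; exact Matrix.PosSemidef.zero
    · have hk := (key u v hu hlt hv).1
      have e : f v - f u = ((((q v - q u) + ε • (κ v - κ u)) - ((c/2)*(v-u)) • (1:Mat D)))
          + (((c/2)*(v-u)) • (1:Mat D)) := by
        simp only [hf]; module
      rw [e]
      have hvu : 0 < v - u := sub_pos.mpr hlt
      exact hk.add (QAux.psd_smul_one (by positivity))
  refine ⟨?_, ⟨C + ε * L, ?_⟩, incr, ⟨?_, ?_⟩, hzero, ?_⟩
  · -- values are PSD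
    intro u hu
    have h := incr 0 u le_rfl hu.1 hu.2
    rwa [hzero, sub_zero] at h
  · -- bounded
    intro u hu
    have h1 : fnorm (f u) ≤ fnorm (q u) + fnorm (ε • κ u) := QAux.fnorm_add_le _ _
    have h2 : fnorm (κ u) ≤ L := by
      have h := hκLip 0 ⟨le_rfl, by norm_num⟩ u hu
      rw [hκ0, sub_zero, sub_zero, abs_of_nonneg hu.1] at h
      nlinarith [hu.2, QAux.fnorm_nonneg (κ u)]
    have h3 : fnorm (ε • κ u) ≤ ε * L := by
      rw [QAux.fnorm_smul, abs_of_pos hε]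
      exact mul_le_mul_of_nonneg_left h2 (le_of_lt hε)
    have := hC u hu
    linarith
  · -- right continuity
    intro u hu
    have hev : ∀ᶠ v in nhdsWithin u (Set.Ici u), v ∈ Set.Ico (0:ℝ) 1 := by
      have h1 : ∀ᶠ v in nhdsWithin u (Set.Ici u), v < 1 :=
        Filter.Eventually.filter_mono nhdsWithin_le_nhds (eventually_lt_nhds hu.2)
      have h2 : ∀ᶠ v in nhdsWithin u (Set.Ici u), v ∈ Set.Ici u := eventually_mem_nhdsWithin
      filter_upwards [h1, h2] with v hv1 hv2
      exact ⟨le_trans hu.1 hv2, hv1⟩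
    have hκt := QAux.tendsto_kappa hκLip hu nhdsWithin_le_nhds hev
    exact (hrc u hu).add (hκt.const_smul ε)
  · -- left limits
    intro u hu
    obtain ⟨Lq, hLq⟩ := hll u hu
    have huI : u ∈ Set.Ico (0:ℝ) 1 := ⟨le_of_lt hu.1, hu.2⟩
    have hev : ∀ᶠ v in nhdsWithin u (Set.Iio u), v ∈ Set.Ico (0:ℝ) 1 := by
      have h1 : ∀ᶠ v in nhdsWithin u (Set.Iio u), (0:ℝ) < v :=
        Filter.Eventually.filter_mono nhdsWithin_le_nhds (eventually_gt_nhds hu.1)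
      have h2 : ∀ᶠ v in nhdsWithin u (Set.Iio u), v ∈ Set.Iio u := eventually_mem_nhdsWithin
      filter_upwards [h1, h2] with v hv1 hv2
      exact ⟨le_of_lt hv1, lt_trans hv2 hu.2⟩
    have hκt := QAux.tendsto_kappa hκLip huI nhdsWithin_le_nhds hev
    exact ⟨Lq + ε • κ u, hLq.add (hκt.const_smul ε)⟩
  · -- the quantitative bounds
    have h21pos : (0:ℝ) < 2/c + 1 := by positivity
    have hinvpos : (0:ℝ) < 1/(2/c+1) := by positivity
    have hcmin : 0 < min (c/2) (1/(2/c+1)) := lt_min (by positivity) hinvpos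
    refine ⟨min (c/2) (1/(2/c+1)), hcmin, ?_⟩
    intro u v hu huv hv
    obtain ⟨k1, k2⟩ := key u v hu huv hv
    have hvu : 0 < v - u := sub_pos.mpr huv
    have e3 : f v - f u = (q v - q u) + ε • (κ v - κ u) := by simp only [hf]; module
    constructor
    · have e2 : (f v - f u) - (min (c/2) (1/(2/c+1)) * (v-u)) • (1:Mat D)
          = ((((q v - q u) + ε • (κ v - κ u)) - ((c/2)*(v-u)) • (1:Mat D)))
            + (((c/2 - min (c/2) (1/(2/c+1))) * (v-u)) • (1:Mat D)) := by
        rw [e3]; module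
      rw [e2]
      refine k1.add (QAux.psd_smul_one (mul_nonneg ?_ (le_of_lt hvu)))
      exact sub_nonneg.mpr (min_le_left _ _)
    · rw [e3]
      refine le_trans k2 ?_
      have h := one_div_le_one_div_of_le hcmin (min_le_right (c/2) (1/(2/c+1)))
      rwa [one_div_one_div] at h


end
end
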